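/- arXiv:1410.3100 — 9 statements merged into one kernel-verified Lean document; each statement's English description precedes it below -/
import Mathlib

section
/- Let Ω ⊂ ℝ² be a bounded simply connected domain, let S = S(c_S,R) ⊂ Ω be a square with ∂S ∩ ∂Ω ≠ ∅, and let B ∈ Ω ∖ S̄; let G_B and T_B be as defined below. Then for every z ∈ T_B and every point u ∈ K(z)̄ ∩ Ω there exists a polygonal path γ ⊂ Ω joining u to B such that (γ ∖ {u}) ∩ S̄ = ∅. In particular, the square K(z) is contained in G_B, i.e. K(z) and B lie in the same connected component of Ω ∖ S̄. -/
/-!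
The path from `B` to `z` given by `T_B` shows that `z` is a limit of points `q ∈ G_B`. A point `q`
outside `S̄` close to `z ∈ ∂S` is joined outside `S̄`, near `z`, to a point `z + t (z - c_S)` of the
outward ray: first radially outwards, then along the image of `[q, z]` under the homothety of
centre `c_S` and ratio `1 + t / R`, which pushes it beyond `∂S`. For small `t` that ray point lies
in `K(z)`, so the convex set `K(z) ⊆ Ω ∖ S̄` meets, hence lies in, `G_B`. Being open and connected,
`G_B` is polygonally connected, and a point `u ∈ K(z)̄` reaches `B` through the centre of `K(z)`.
-/

open Set Metric

/-- A polygonal path (as a subset of the plane) joining `x` to `y`. -/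
def IsPolyPath (γ : Set (ℝ × ℝ)) (x y : ℝ × ℝ) : Prop :=
  ∃ (n : ℕ) (p : Fin (n + 2) → ℝ × ℝ), p 0 = x ∧ p (Fin.last (n + 1)) = y ∧
    γ = ⋃ i : Fin (n + 1), segment ℝ (p i.castSucc) (p i.succ)

theorem isPolyPath_segment (x y : ℝ × ℝ) : IsPolyPath (segment ℝ x y) x y :=
  ⟨0, ![x, y], rfl, rfl, by ext; simp [Fin.exists_fin_one]⟩

namespace IsPolyPath

variable {γ : Set (ℝ × ℝ)} {x y : ℝ × ℝ}

theorem segment_union (h : IsPolyPath γ x y) (w : ℝ × ℝ) :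
    IsPolyPath (segment ℝ w x ∪ γ) w y := by
  obtain ⟨n, p, rfl, rfl, rfl⟩ := h
  refine ⟨n + 1, Fin.cons w p, rfl, rfl, ?_⟩
  ext v
  simp [Fin.exists_fin_succ]

theorem left_mem (h : IsPolyPath γ x y) : x ∈ γ := by
  obtain ⟨n, p, rfl, -, rfl⟩ := h
  exact mem_iUnion.2 ⟨0, left_mem_segment ℝ _ _⟩

theorem right_mem (h : IsPolyPath γ x y) : y ∈ γ := by
  obtain ⟨n, p, -, rfl, rfl⟩ := h
  exact mem_iUnion.2 ⟨Fin.last n, right_mem_segment ℝ _ _⟩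

theorem isPreconnected (h : IsPolyPath γ x y) : IsPreconnected γ := by
  obtain ⟨n, p, -, -, rfl⟩ := h
  refine IsPreconnected.iUnion_of_chain (fun _ ↦ (convex_segment _ _).isPreconnected) fun i ↦ ?_
  induction i using Fin.lastCases with
  | last => simpa using ⟨_, left_mem_segment ℝ _ _⟩
  | cast i =>
    rw [Fin.orderSucc_castSucc]
    exact ⟨p i.succ.castSucc, by rw [← Fin.succ_castSucc]; exact right_mem_segment ℝ _ _,
      left_mem_segment ℝ _ _⟩

end IsPolyPath

theorem IsOpen.exists_isPolyPath {U : Set (ℝ × ℝ)} (hU : IsOpen U) (hU' : IsPreconnected U)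
    {x y : ℝ × ℝ} (hx : x ∈ U) (hy : y ∈ U) : ∃ γ ⊆ U, IsPolyPath γ x y := by
  let joins (a : ℝ × ℝ) : Prop := ∃ γ ⊆ U, IsPolyPath γ a y
  have step {a b : ℝ × ℝ} (hab : segment ℝ b a ⊆ U) : joins a → joins b :=
    fun ⟨γ, hγU, hγ⟩ ↦ ⟨_, union_subset hab hγU, hγ.segment_union b⟩
  suffices joins x ↔ joins y from
    this.2 ⟨_, by simpa using hy, isPolyPath_segment y y⟩
  refine hU'.induction₂' (fun a b ↦ joins a ↔ joins b) (fun a ha ↦ ?_)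
    (fun _ _ _ _ _ _ ↦ Iff.trans) hx hy
  obtain ⟨r, hr, hrU⟩ := Metric.isOpen_iff.1 hU a ha
  filter_upwards [mem_nhdsWithin_of_mem_nhds (ball_mem_nhds a hr)] with b hb
  have hab : segment ℝ a b ⊆ U :=
    ((convex_ball a r).segment_subset (mem_ball_self hr) hb).trans hrU
  have hba : segment ℝ b a ⊆ U := segment_symm ℝ a b ▸ hab
  exact ⟨⟨step hba, step hab⟩, ⟨step hab, step hba⟩⟩

theorem IsPreconnected.mem_closure_diff_singleton {X : Type*} [TopologicalSpace X] [T1Space X]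
    {s : Set X} (hs : IsPreconnected s) {x y : X} (hx : x ∈ s) (hy : y ∈ s) (hxy : x ≠ y) :
    y ∈ closure (s \ {y}) := by
  by_contra hy'
  obtain ⟨w, hws, hw, hwy⟩ := hs _ _ isClosed_closure.isOpen_compl isOpen_compl_singleton
    (fun w _ ↦ (em (w = y)).imp (· ▸ hy') id) ⟨y, hy, hy'⟩ ⟨x, hx, hxy⟩
  exact hw (subset_closure ⟨hws, hwy⟩)

open AffineMap

variable {E : Type*} [NormedAddCommGroup E] [NormedSpace ℝ E]

theorem add_smul_sub_eq_lineMap (c z : E) (a : ℝ) : z + a • (z - c) = lineMap c z (1 + a) := by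
  rw [lineMap_apply, vsub_eq_sub, vadd_eq_add]
  module

theorem segment_diff_singleton_subset_ball {u a : E} {r : ℝ} (hu : u ∈ closure (ball a r))
    (hr : 0 < r) : segment ℝ u a \ {u} ⊆ ball a r := by
  rintro w ⟨hw, hwu⟩
  rw [← insert_endpoints_openSegment] at hw
  rcases hw with rfl | rfl | hw
  · exact absurd rfl hwu
  · exact mem_ball_self hr
  · have := (convex_ball a r).openSegment_closure_interior_subset_interior hu
      (by rw [isOpen_ball.interior_eq]; exact mem_ball_self hr) hw
    rwa [isOpen_ball.interior_eq] at this

section SphereNeighbourhood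

variable {c z : E} {R : ℝ}

theorem dist_lineMap_one_add_div (hR : 0 < R) (hz : dist z c = R) {r : ℝ} (hr : 0 ≤ r) :
    dist (lineMap c z (1 + r / R)) c = R + r := by
  rw [dist_lineMap_left, dist_comm, hz, Real.norm_of_nonneg (by positivity)]
  field_simp

theorem ball_lineMap_disjoint_closedBall (hR : 0 < R) (hz : dist z c = R) {r : ℝ} (hr : 0 ≤ r) :
    Disjoint (ball (lineMap c z (1 + r / R)) r) (closedBall c R) :=
  ball_disjoint_closedBall (by rw [dist_lineMap_one_add_div hR hz hr, add_comm])

theorem lineMap_mem_ball_lineMap (hR : 0 < R) (hz : dist z c = R) {r s : ℝ} (hs : 0 < s)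
    (hsr : s ≤ r) : lineMap c z (1 + s / R) ∈ ball (lineMap c z (1 + r / R)) r := by
  rw [mem_ball, dist_lineMap_lineMap, dist_comm c, hz, Real.dist_eq, add_sub_add_left_eq_sub,
    ← sub_div, abs_div, abs_of_pos hR, div_mul_cancel₀ _ hR.ne', abs_lt]
  constructor <;> linarith

theorem exists_isPreconnected_outside_closedBall (hz : dist z c = R) {s : ℝ} (hs : 0 < s)
    (hsR : s ≤ R) {q : E} (hq : R < dist q c) (hqz : dist q z < s / 4) :
    ∃ C, IsPreconnected C ∧ q ∈ C ∧ lineMap c z (1 + s / R) ∈ C ∧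
      C ⊆ ball z (2 * s) \ closedBall c R := by
  have hR : 0 < R := hs.trans_le hsR
  set μ := 1 + s / R
  have hsRR : s / R * R = s := div_mul_cancel₀ s hR.ne'
  have hsR1 : s / R ≤ 1 := (div_le_one hR).2 hsR
  have hμ1 : 1 ≤ μ := le_add_of_nonneg_right (by positivity)
  have near : ∀ w, dist w z < s / 4 → ∀ ν ∈ Icc 1 μ, dist (lineMap c w ν) z < 2 * s := by
    rintro w hw ν ⟨hν1, hνμ⟩
    have hcw : dist c w ≤ R + s / 4 := by
      linarith [dist_triangle c z w, dist_comm c z, dist_comm z w]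
    calc dist (lineMap c w ν) z ≤ dist (lineMap c w ν) w + dist w z := dist_triangle _ _ _
      _ = (ν - 1) * dist c w + dist w z := by
        rw [dist_lineMap_right, Real.norm_eq_abs, abs_sub_comm, abs_of_nonneg (by linarith)]
      _ < 2 * s := by nlinarith [dist_nonneg (x := c) (y := w)]
  have far : ∀ w, dist w z < s / 4 → R < dist (lineMap c w μ) c := by
    intro w hw
    have hcw : R - s / 4 ≤ dist c w := by
      linarith [dist_triangle c w z, dist_comm c z]
    rw [dist_lineMap_left, Real.norm_of_nonneg (by linarith)]
    nlinarith
  have radial : segment ℝ q (lineMap c q μ) = lineMap c q '' Icc 1 μ := by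
    rw [← segment_eq_Icc hμ1, image_segment, lineMap_apply_one]
  have scaled : segment ℝ (lineMap c q μ) (lineMap c z μ) = homothety c μ '' segment ℝ q z := by
    rw [image_segment, homothety_eq_lineMap, homothety_eq_lineMap]
  refine ⟨segment ℝ q (lineMap c q μ) ∪ segment ℝ (lineMap c q μ) (lineMap c z μ),
    (convex_segment _ _).isPreconnected.union _ (right_mem_segment ℝ _ _)
      (left_mem_segment ℝ _ _) (convex_segment _ _).isPreconnected,
    .inl (left_mem_segment ℝ _ _), .inr (right_mem_segment ℝ _ _), ?_⟩
  rw [union_subset_iff, radial, scaled, image_subset_iff, image_subset_iff]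
  constructor
  · rintro ν hν
    refine ⟨mem_ball.2 (near q hqz ν hν), fun h ↦ (mem_closedBall.1 h).not_gt ?_⟩
    rw [dist_lineMap_left, Real.norm_of_nonneg (by linarith [hν.1]), dist_comm]
    nlinarith [hν.1]
  · intro w hw
    have hwz : dist w z < s / 4 :=
      (convex_ball z (s / 4)).segment_subset (mem_ball.2 hqz) (mem_ball_self (by positivity)) hw
    rw [mem_preimage, homothety_eq_lineMap]
    exact ⟨mem_ball.2 (near w hwz μ ⟨hμ1, le_rfl⟩), fun h ↦ (mem_closedBall.1 h).not_gt (far w hwz)⟩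

theorem ball_lineMap_subset_connectedComponentIn {Ω : Set E} (hΩ : IsOpen Ω) (hR : 0 < R)
    (hz : dist z c = R) (hzΩ : z ∈ Ω) {r : ℝ} (hr : 0 < r)
    (hK : ball (lineMap c z (1 + r / R)) r ⊆ Ω) {B : E}
    (hzB : z ∈ closure (connectedComponentIn (Ω \ closedBall c R) B)) :
    ball (lineMap c z (1 + r / R)) r ⊆ connectedComponentIn (Ω \ closedBall c R) B := by
  obtain ⟨ε, hε, hεΩ⟩ := Metric.isOpen_iff.1 hΩ z hzΩ
  set s := min (min R r) (ε / 2)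
  have hs : 0 < s := by positivity
  have hsR : s ≤ R := (min_le_left _ _).trans (min_le_left _ _)
  have hsr : s ≤ r := (min_le_left _ _).trans (min_le_right _ _)
  have hsε : 2 * s ≤ ε := by linarith [min_le_right (min R r) (ε / 2)]
  obtain ⟨q, hqG, hzq⟩ := Metric.mem_closure_iff.1 hzB (s / 4) (by positivity)
  have hqW := connectedComponentIn_subset _ _ hqG
  obtain ⟨C, hC, hqC, hyC, hCsub⟩ := exists_isPreconnected_outside_closedBall hz hs hsR
    (not_le.1 hqW.2) (dist_comm z q ▸ hzq)
  have hCW : C ⊆ Ω \ closedBall c R := fun w hw ↦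
    ⟨hεΩ (ball_subset_ball hsε (hCsub hw).1), (hCsub hw).2⟩
  have hyB : lineMap c z (1 + s / R) ∈ connectedComponentIn (Ω \ closedBall c R) B := by
    rw [connectedComponentIn_eq hqG]
    exact hC.subset_connectedComponentIn hqC hCW hyC
  rw [connectedComponentIn_eq hyB]
  exact (convex_ball _ _).isPreconnected.subset_connectedComponentIn
    (lineMap_mem_ball_lineMap hR hz hs hsr)
    (subset_sdiff.2 ⟨hK, ball_lineMap_disjoint_closedBall hR hz hr.le⟩)

end SphereNeighbourhood

theorem maximal_square_in_GB_general
    (Ω : Set (ℝ × ℝ)) (hΩo : IsOpen Ω)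
    (cS : ℝ × ℝ) (R : ℝ) (hR : 0 < R)
    (B : ℝ × ℝ) (hB : B ∈ Ω \ closure (Metric.ball cS R))
    (TB : Set (ℝ × ℝ))
    (hTBcomp : ∃ t ∈ frontier (Metric.ball cS R) ∩ Ω,
      TB = connectedComponentIn (frontier (Metric.ball cS R) ∩ Ω) t)
    (hTBassoc : ∀ x ∈ connectedComponentIn (Ω \ closure (Metric.ball cS R)) B,
      ∀ y ∈ TB, ∃ γ : Set (ℝ × ℝ), IsPolyPath γ x y ∧
        γ \ {y} ⊆ connectedComponentIn (Ω \ closure (Metric.ball cS R)) B)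
    (z : ℝ × ℝ) (hz : z ∈ TB)
    (rz : ℝ) (hrz : 0 < rz)
    (hKz : Metric.ball (z + (rz / R) • (z - cS)) rz ⊆ Ω) :
    (∀ u ∈ closure (Metric.ball (z + (rz / R) • (z - cS)) rz) ∩ Ω,
      ∃ γ : Set (ℝ × ℝ), IsPolyPath γ u B ∧ γ ⊆ Ω ∧
        (γ \ {u}) ∩ closure (Metric.ball cS R) = ∅) ∧
    Metric.ball (z + (rz / R) • (z - cS)) rz ⊆
      connectedComponentIn (Ω \ closure (Metric.ball cS R)) B := by
  obtain ⟨t, -, rfl⟩ := hTBcomp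
  obtain ⟨hzS, hzΩ⟩ := connectedComponentIn_subset _ _ hz
  rw [frontier_ball cS hR.ne', mem_sphere] at hzS
  rw [closure_ball cS hR.ne'] at hB hTBassoc ⊢
  rw [add_smul_sub_eq_lineMap] at hKz ⊢
  set a := lineMap cS z (1 + rz / R)
  set G := connectedComponentIn (Ω \ closedBall cS R) B
  have hBG : B ∈ G := mem_connectedComponentIn hB
  obtain ⟨γ₀, hγ₀, hγ₀G⟩ := hTBassoc B hBG z hz
  have hBz : B ≠ z := fun h ↦ hB.2 (h ▸ sphere_subset_closedBall (mem_sphere.2 hzS))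
  have hzG : z ∈ closure G := closure_mono hγ₀G
    (hγ₀.isPreconnected.mem_closure_diff_singleton hγ₀.left_mem hγ₀.right_mem hBz)
  have hKG := ball_lineMap_subset_connectedComponentIn hΩo hR hzS hzΩ hrz hKz hzG
  refine ⟨fun u hu ↦ ?_, hKG⟩
  obtain ⟨γ, hγG, hγ⟩ := (hΩo.sdiff isClosed_closedBall).connectedComponentIn.exists_isPolyPath
    isPreconnected_connectedComponentIn (hKG (mem_ball_self hrz)) hBG
  have hγ'G : (segment ℝ u a ∪ γ) \ {u} ⊆ G := by
    rintro w ⟨hw | hw, hwu⟩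
    exacts [hKG (segment_diff_singleton_subset_ball hu.1 hrz ⟨hw, hwu⟩), hγG hw]
  have hγ'W := hγ'G.trans (connectedComponentIn_subset _ _)
  refine ⟨_, hγ.segment_union u, fun w hw ↦ ?_, (subset_sdiff.1 hγ'W).2.inter_eq⟩
  by_cases hwu : w = u
  exacts [hwu ▸ hu.2, (hγ'W ⟨hw, hwu⟩).1]

/-- Setting: `Ω` a bounded simply connected domain in `ℝ²`
(uniform norm; `Metric.ball` is an open axis-parallel square), `S = ball cS R ⊆ Ω`
with `∂S ∩ ∂Ω ≠ ∅`, `B ∈ Ω ∖ S̄`; `G_B := connectedComponentIn (Ω ∖ S̄) B`;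
`T_B` the component of `∂S ∩ Ω` associated to `G_B`; for `z ∈ T_B`,
`K(z) = ball (z + (r_z/R)•(z - cS)) r_z` with `r_z` the maximal admissible radius.
Conclusion: every `u ∈ K(z)̄ ∩ Ω` can be joined to `B` by a polygonal path
`γ ⊆ Ω` with `(γ ∖ {u}) ∩ S̄ = ∅`; in particular `K(z) ⊆ G_B`. -/
theorem maximal_square_in_GB
    (Ω : Set (ℝ × ℝ)) (hΩo : IsOpen Ω) (hΩconn : IsConnected Ω)
    (hΩbdd : Bornology.IsBounded Ω) (hΩsc : SimplyConnectedSpace Ω)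
    (cS : ℝ × ℝ) (R : ℝ) (hR : 0 < R)
    (hS : Metric.ball cS R ⊆ Ω)
    (hbd : (frontier (Metric.ball cS R) ∩ frontier Ω).Nonempty)
    (B : ℝ × ℝ) (hB : B ∈ Ω \ closure (Metric.ball cS R))
    (TB : Set (ℝ × ℝ))
    (hTBcomp : ∃ t ∈ frontier (Metric.ball cS R) ∩ Ω,
      TB = connectedComponentIn (frontier (Metric.ball cS R) ∩ Ω) t)
    (hTBassoc : ∀ x ∈ connectedComponentIn (Ω \ closure (Metric.ball cS R)) B,
      ∀ y ∈ TB, ∃ γ : Set (ℝ × ℝ), IsPolyPath γ x y ∧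
        γ \ {y} ⊆ connectedComponentIn (Ω \ closure (Metric.ball cS R)) B)
    (z : ℝ × ℝ) (hz : z ∈ TB)
    (rz : ℝ) (hrz : 0 < rz)
    (hKz : Metric.ball (z + (rz / R) • (z - cS)) rz ⊆ Ω)
    (hKzmax : ∀ ρ : ℝ, 0 < ρ → Metric.ball (z + (ρ / R) • (z - cS)) ρ ⊆ Ω → ρ ≤ rz) :
    (∀ u ∈ closure (Metric.ball (z + (rz / R) • (z - cS)) rz) ∩ Ω,
      ∃ γ : Set (ℝ × ℝ), IsPolyPath γ u B ∧ γ ⊆ Ω ∧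
        (γ \ {u}) ∩ closure (Metric.ball cS R) = ∅) ∧
    Metric.ball (z + (rz / R) • (z - cS)) rz ⊆
      connectedComponentIn (Ω \ closure (Metric.ball cS R)) B :=
  maximal_square_in_GB_general Ω hΩo cS R hR B hB TB hTBcomp hTBassoc z hz rz hrz hKz
end

section
/- Let Ω ⊂ ℝ² be a bounded domain, let S = S(c_S,R) ⊂ Ω be a square, and let [a,b] be a closed side of S. Let z, y ∈ [a,b] ∩ Ω with z ≠ y, and let r_z, r_y denote the radii of the maximal squares K(z), K(y). Then: (i) if z, y ∈ (a,b), then |r_y − r_z| ≤ (R + r_y + r_z)·‖y−z‖ / dist({z,y},{a,b}); (ii) if z ∈ {a,b} and y ∈ (a,b), then r_y ≤ r_z + (R + r_z)·‖y−z‖ / ‖y−h‖, where h denotes the endpoint of [a,b] different from z. -/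
/-!
Write the side as `{c + m + τ • u : |τ| ≤ R}`, where `u` is its unit direction and `m` points from
`c` to its midpoint, so that `‖α • u + β • m‖ = max |α| (R * |β|)` in the uniform norm.
The square `K_ρ(z)` for `z = c + m + t • u` is the ball of radius `ρ` about
`c + (1 + ρ / R) • (m + t • u)`, and `K_ρ(z) ⊆ K(y)` for `y = c + m + s • u` as soon as
`|t * (R + ρ) - s * (R + r_y)| ≤ R * (r_y - ρ)`; maximality of `r_z` then gives `ρ ≤ r_z`.
Choosing the largest admissible `ρ` yields both estimates.
-/

open Set Metric

theorem sub_le_div_of_forall_abs_le_imp_le {R t s r r' : ℝ} (ht : |t| < R) (hr : 0 < r)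
    (hr' : 0 ≤ r')
    (H : ∀ ρ, 0 < ρ → |t * (R + ρ) - s * (R + r)| ≤ R * (r - ρ) → ρ ≤ r') :
    r - r' ≤ (R + r) * |s - t| / (R - |t|) := by
  have hd : 0 < R - |t| := by linarith
  set q := (R + r) * |s - t| / (R - |t|)
  have hq : 0 ≤ q := div_nonneg (mul_nonneg (by linarith [abs_nonneg t]) (abs_nonneg _)) hd.le
  have hqd : q * (R - |t|) = (R + r) * |s - t| := div_mul_cancel₀ _ hd.ne'
  by_contra! hlt
  refine absurd (H (r - q) (by linarith) ?_) (by linarith)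
  calc |t * (R + (r - q)) - s * (R + r)| = |(t - s) * (R + r) - t * q| := by ring_nf
    _ ≤ |(t - s) * (R + r)| + |t * q| := abs_sub _ _
    _ = |s - t| * (R + r) + |t| * q := by
      rw [abs_mul, abs_mul, abs_of_pos (by linarith [abs_nonneg t] : 0 < R + r),
        abs_of_nonneg hq, abs_sub_comm]
    _ = R * (r - (r - q)) := by linarith

theorem le_add_div_of_forall_abs_le_imp_le {R s r r' : ℝ} (hs : |s| < R) (hr : 0 < r)
    (hr' : 0 ≤ r')
    (H : ∀ ρ, 0 < ρ → |-R * (R + ρ) - s * (R + r)| ≤ R * (r - ρ) → ρ ≤ r') :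
    r ≤ r' + (R + r') * (R + s) / (R - s) := by
  obtain ⟨hs₁, hs₂⟩ := abs_lt.mp hs
  have hR : 0 < R := by linarith
  by_contra! hlt
  have hgap : 2 * R * r' < (R - s) * r - R * (R + s) := by
    have hd : 0 < R - s := by linarith
    have := div_mul_cancel₀ ((R + r') * (R + s)) hd.ne'
    nlinarith
  set ρ := ((R - s) * r - R * (R + s)) / (2 * R) with hρ_def
  have hρ : 2 * R * ρ = (R - s) * r - R * (R + s) := by rw [hρ_def]; field_simp
  -- this `ρ` makes the condition an equality: both sides are `(R + s) * (R + r) / 2`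
  refine absurd (H ρ (by nlinarith) ?_) (by nlinarith)
  have hcond : -R * (R + ρ) - s * (R + r) = -(R * (r - ρ)) := by linarith
  rw [hcond, abs_neg, abs_of_nonneg (by nlinarith)]

theorem eq_and_abs_eq_of_abs_add_eq {R x y : ℝ} (hx : |x| ≤ R) (hy : |y| ≤ R)
    (h : |x + y| = 2 * R) : x = y ∧ |x| = R := by
  obtain ⟨hx₁, hx₂⟩ := abs_le.mp hx
  obtain ⟨hy₁, hy₂⟩ := abs_le.mp hy
  obtain rfl : x = y := by rcases abs_cases (x + y) with ⟨e, _⟩ | ⟨e, _⟩ <;> linarith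
  rw [← two_mul, abs_mul, abs_two] at h
  exact ⟨rfl, by linarith⟩

section SideFrame

variable {E : Type*} [SeminormedAddCommGroup E] [NormedSpace ℝ E]

/-- `u` is the unit direction of a side of the square `ball c R` and `m` the vector from `c` to
the midpoint of that side. -/
def IsSideFrame (R : ℝ) (u m : E) : Prop :=
  ∀ α β : ℝ, ‖α • u + β • m‖ = max |α| (R * |β|)

theorem exists_eq_add_smul_of_mem_openSegment {R : ℝ} (hR : 0 < R) {x u w : E}
    (hw : w ∈ openSegment ℝ (x - R • u) (x + R • u)) : ∃ τ, |τ| < R ∧ w = x + τ • u := by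
  rw [openSegment_eq_image'] at hw
  obtain ⟨θ, ⟨hθ₀, hθ₁⟩, rfl⟩ := hw
  refine ⟨R * (2 * θ - 1), ?_, by module⟩
  have : |2 * θ - 1| < 1 := abs_lt.mpr ⟨by linarith, by linarith⟩
  rw [abs_mul, abs_of_pos hR]
  nlinarith

namespace IsSideFrame

variable {R : ℝ} {u m : E}

theorem neg (hF : IsSideFrame R u m) : IsSideFrame R (-u) m := fun α β => by
  rw [smul_neg, ← neg_smul, hF, abs_neg]

theorem norm_eq_one (hF : IsSideFrame R u m) : ‖u‖ = 1 := by
  simpa using hF 1 0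

theorem dist_add_smul (hF : IsSideFrame R u m) (x : E) (t s : ℝ) :
    dist (x + t • u) (x + s • u) = |t - s| := by
  rw [dist_eq_norm, add_sub_add_left_eq_sub, ← sub_smul, norm_smul, hF.norm_eq_one, mul_one,
    Real.norm_eq_abs]

theorem min_dist_sub_add (hF : IsSideFrame R u m) (x : E) {τ : ℝ} (hτ : |τ| ≤ R) :
    min (dist (x + τ • u) (x - R • u)) (dist (x + τ • u) (x + R • u)) = R - |τ| := by
  obtain ⟨hτ₁, hτ₂⟩ := abs_le.mp hτ
  rw [sub_eq_add_neg x, ← neg_smul, hF.dist_add_smul, hF.dist_add_smul,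
    abs_of_nonneg (by linarith : 0 ≤ τ - -R), abs_of_nonpos (by linarith : τ - R ≤ 0),
    abs_eq_max_neg, ← min_sub_sub_left, min_comm]
  ring_nf

theorem ball_subset_ball (hF : IsSideFrame R u m) (hR : 0 < R) (c : E) {t s ρ r : ℝ}
    (h : |t * (R + ρ) - s * (R + r)| ≤ R * (r - ρ)) :
    ball (c + m + t • u + (ρ / R) • (c + m + t • u - c)) ρ ⊆
      ball (c + m + s • u + (r / R) • (c + m + s • u - c)) r := by
  have hdiff : c + m + t • u + (ρ / R) • (c + m + t • u - c) -
      (c + m + s • u + (r / R) • (c + m + s • u - c)) =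
      (R⁻¹ * (t * (R + ρ) - s * (R + r))) • u + (R⁻¹ * (ρ - r)) • m := by
    match_scalars <;> field_simp <;> ring
  have hρr : ρ ≤ r := by nlinarith [abs_nonneg (t * (R + ρ) - s * (R + r))]
  refine ball_subset_ball' ?_
  rw [dist_eq_norm, hdiff, hF, abs_mul, abs_mul, abs_inv, abs_of_pos hR, ← mul_assoc,
    mul_inv_cancel₀ hR.ne', one_mul, abs_of_nonpos (by linarith : ρ - r ≤ 0), neg_sub,
    ← le_sub_iff_add_le', max_le_iff, inv_mul_le_iff₀ hR]
  exact ⟨h, le_rfl⟩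

theorem sub_le_of_maximal (hF : IsSideFrame R u m) (hR : 0 < R) (c : E) {Ω : Set E}
    {t s rz ry : ℝ} (ht : |t| < R) (hrz : 0 ≤ rz) (hry : 0 < ry)
    (hKy : ball (c + m + s • u + (ry / R) • (c + m + s • u - c)) ry ⊆ Ω)
    (hKzmax : ∀ ρ : ℝ, 0 < ρ →
      ball (c + m + t • u + (ρ / R) • (c + m + t • u - c)) ρ ⊆ Ω → ρ ≤ rz) :
    ry - rz ≤ (R + ry) * |s - t| / (R - |t|) :=
  sub_le_div_of_forall_abs_le_imp_le ht hry hrz fun ρ hρ h =>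
    hKzmax ρ hρ ((hF.ball_subset_ball hR c h).trans hKy)

theorem abs_sub_le_of_maximal (hF : IsSideFrame R u m) (hR : 0 < R) (c : E) {Ω : Set E}
    {t s rz ry : ℝ} (ht : |t| < R) (hs : |s| < R) (hrz : 0 < rz) (hry : 0 < ry)
    (hKz : ball (c + m + t • u + (rz / R) • (c + m + t • u - c)) rz ⊆ Ω)
    (hKzmax : ∀ ρ : ℝ, 0 < ρ →
      ball (c + m + t • u + (ρ / R) • (c + m + t • u - c)) ρ ⊆ Ω → ρ ≤ rz)
    (hKy : ball (c + m + s • u + (ry / R) • (c + m + s • u - c)) ry ⊆ Ω)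
    (hKymax : ∀ ρ : ℝ, 0 < ρ →
      ball (c + m + s • u + (ρ / R) • (c + m + s • u - c)) ρ ⊆ Ω → ρ ≤ ry) :
    |ry - rz| ≤ (R + ry + rz) * |s - t| / min (R - |t|) (R - |s|) := by
  have hzy := hF.sub_le_of_maximal hR c ht hrz.le hry hKy hKzmax
  have hyz := hF.sub_le_of_maximal hR c hs hry.le hrz hKz hKymax
  rw [abs_sub_comm t s] at hyz
  have hmin : 0 < min (R - |t|) (R - |s|) := lt_min (by linarith) (by linarith)
  have hnum : 0 ≤ (R + ry + rz) * |s - t| := by positivity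
  have hzy' : (R + ry) * |s - t| ≤ (R + ry + rz) * |s - t| :=
    mul_le_mul_of_nonneg_right (by linarith) (abs_nonneg _)
  have hyz' : (R + rz) * |s - t| ≤ (R + ry + rz) * |s - t| :=
    mul_le_mul_of_nonneg_right (by linarith) (abs_nonneg _)
  rw [abs_sub_le_iff]
  exact ⟨hzy.trans (div_le_div₀ hnum hzy' hmin (min_le_left _ _)),
    hyz.trans (div_le_div₀ hnum hyz' hmin (min_le_right _ _))⟩

theorem le_of_maximal_of_endpoint (hF : IsSideFrame R u m) (hR : 0 < R) (c : E) {Ω : Set E}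
    {z h y : E} (hz : z = c + m - R • u) (hh : h = c + m + R • u) (hy : y ∈ openSegment ℝ z h)
    {rz ry : ℝ} (hrz : 0 ≤ rz) (hry : 0 < ry)
    (hKy : ball (y + (ry / R) • (y - c)) ry ⊆ Ω)
    (hKzmax : ∀ ρ : ℝ, 0 < ρ → ball (z + (ρ / R) • (z - c)) ρ ⊆ Ω → ρ ≤ rz) :
    ry ≤ rz + (R + rz) * ‖y - z‖ / ‖y - h‖ := by
  subst hz hh
  obtain ⟨s, hs, rfl⟩ := exists_eq_add_smul_of_mem_openSegment hR hy
  rw [sub_eq_add_neg (c + m), ← neg_smul] at hKzmax ⊢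
  obtain ⟨hs₁, hs₂⟩ := abs_lt.mp hs
  rw [← dist_eq_norm, ← dist_eq_norm, hF.dist_add_smul, hF.dist_add_smul, sub_neg_eq_add,
    abs_of_pos (by linarith : 0 < s + R), abs_of_neg (by linarith : s - R < 0), neg_sub,
    add_comm s R]
  exact le_add_div_of_forall_abs_le_imp_le hs hry hrz fun ρ hρ h =>
    hKzmax ρ hρ ((hF.ball_subset_ball hR c h).trans hKy)

end IsSideFrame

end SideFrame

theorem Prod.norm_eq_max_abs (v : ℝ × ℝ) : ‖v‖ = max |v.1| |v.2| := rfl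

theorem exists_isSideFrame_of_norm_eq {R : ℝ} (hR : 0 < R) {p q : ℝ × ℝ} (hp : ‖p‖ = R)
    (hq : ‖q‖ = R) (hadd : ‖p + q‖ = 2 * R) (hsub : ‖p - q‖ = 2 * R) :
    ∃ u m : ℝ × ℝ, IsSideFrame R u m ∧ p = m - R • u ∧ q = m + R • u := by
  rw [Prod.norm_eq_max_abs] at hp hq hadd hsub
  have hp₁ := (le_max_left _ _).trans hp.le
  have hp₂ := (le_max_right _ _).trans hp.le
  have hq₁ := (le_max_left _ _).trans hq.le
  have hq₂ := (le_max_right _ _).trans hq.le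
  simp only [sub_eq_add_neg, Prod.fst_add, Prod.snd_add, Prod.fst_neg, Prod.snd_neg] at hadd hsub
  rcases max_choice |p.1 + q.1| |p.2 + q.2| with h | h
  · obtain ⟨h₁, hp₁R⟩ := eq_and_abs_eq_of_abs_add_eq hp₁ hq₁ (h.symm.trans hadd)
    rw [h₁, add_neg_cancel, abs_zero, max_eq_right (abs_nonneg _)] at hsub
    obtain ⟨h₂, hp₂R⟩ := eq_and_abs_eq_of_abs_add_eq hp₂ (abs_neg q.2 ▸ hq₂) hsub
    refine ⟨R⁻¹ • (0, -p.2), (p.1, 0), fun α β => ?_, ?_, ?_⟩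
    · simp [abs_of_pos hR, hp₁R, hp₂R, hR.ne', max_comm, mul_comm]
    · rw [smul_inv_smul₀ hR.ne']; ext <;> simp
    · rw [smul_inv_smul₀ hR.ne']; ext <;> simp [h₁, h₂]
  · obtain ⟨h₂, hp₂R⟩ := eq_and_abs_eq_of_abs_add_eq hp₂ hq₂ (h.symm.trans hadd)
    rw [h₂, add_neg_cancel, abs_zero, max_eq_left (abs_nonneg _)] at hsub
    obtain ⟨h₁, hp₁R⟩ := eq_and_abs_eq_of_abs_add_eq hp₁ (abs_neg q.1 ▸ hq₁) hsub
    refine ⟨R⁻¹ • (-p.1, 0), (0, p.2), fun α β => ?_, ?_, ?_⟩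
    · simp [abs_of_pos hR, hp₁R, hp₂R, hR.ne', mul_comm]
    · rw [smul_inv_smul₀ hR.ne']; ext <;> simp
    · rw [smul_inv_smul₀ hR.ne']; ext <;> simp [h₁, h₂]

theorem exists_isSideFrame {c a b : ℝ × ℝ} {R : ℝ} (hR : 0 < R)
    (hab : segment ℝ a b ⊆ sphere c R) (hlen : dist a b = 2 * R) :
    ∃ u m : ℝ × ℝ, IsSideFrame R u m ∧ a = c + m - R • u ∧ b = c + m + R • u := by
  obtain ⟨p, rfl⟩ : ∃ p, a = c + p := ⟨a - c, (add_sub_cancel c a).symm⟩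
  obtain ⟨q, rfl⟩ : ∃ q, b = c + q := ⟨b - c, (add_sub_cancel c b).symm⟩
  have hp : ‖p‖ = R := by simpa using hab (left_mem_segment ℝ _ _)
  have hq : ‖q‖ = R := by simpa using hab (right_mem_segment ℝ _ _)
  have hadd : ‖p + q‖ = 2 * R := by
    have := hab (midpoint_mem_segment (c + p) (c + q))
    rw [mem_sphere, dist_eq_norm, midpoint_eq_smul_add, invOf_eq_inv,
      show (2 : ℝ)⁻¹ • (c + p + (c + q)) - c = (2 : ℝ)⁻¹ • (p + q) by module, norm_smul] at this
    norm_num at this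
    linarith
  have hsub : ‖p - q‖ = 2 * R := by simpa [dist_eq_norm] using hlen
  obtain ⟨u, m, hF, rfl, rfl⟩ := exists_isSideFrame_of_norm_eq hR hp hq hadd hsub
  exact ⟨u, m, hF, (add_sub_assoc c m _).symm, (add_assoc c m _).symm⟩

theorem maximal_square_radius_comparison_general
    (Ω : Set (ℝ × ℝ)) (cS : ℝ × ℝ) (R : ℝ) (hR : 0 < R) (a b : ℝ × ℝ)
    (hside : segment ℝ a b ⊆ frontier (Metric.ball cS R))
    (hlen : dist a b = 2 * R)
    (z y : ℝ × ℝ) (rz : ℝ) (hrz : 0 < rz)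
    (hKz : Metric.ball (z + (rz / R) • (z - cS)) rz ⊆ Ω)
    (hKzmax : ∀ ρ : ℝ, 0 < ρ → Metric.ball (z + (ρ / R) • (z - cS)) ρ ⊆ Ω → ρ ≤ rz)
    (ry : ℝ) (hry : 0 < ry)
    (hKy : Metric.ball (y + (ry / R) • (y - cS)) ry ⊆ Ω)
    (hKymax : ∀ ρ : ℝ, 0 < ρ → Metric.ball (y + (ρ / R) • (y - cS)) ρ ⊆ Ω → ρ ≤ ry) :
    (z ∈ openSegment ℝ a b → y ∈ openSegment ℝ a b →
      |ry - rz| ≤ (R + ry + rz) * ‖y - z‖ /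
        min (min (dist z a) (dist z b)) (min (dist y a) (dist y b))) ∧
    (∀ h : ℝ × ℝ, ((z = a ∧ h = b) ∨ (z = b ∧ h = a)) → y ∈ openSegment ℝ a b →
      ry ≤ rz + (R + rz) * ‖y - z‖ / ‖y - h‖) := by
  rw [frontier_ball cS hR.ne'] at hside
  obtain ⟨u, m, hF, rfl, rfl⟩ := exists_isSideFrame hR hside hlen
  refine ⟨fun hz hy => ?_, ?_⟩
  · obtain ⟨t, ht, rfl⟩ := exists_eq_add_smul_of_mem_openSegment hR hz
    obtain ⟨s, hs, rfl⟩ := exists_eq_add_smul_of_mem_openSegment hR hy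
    rw [hF.min_dist_sub_add _ ht.le, hF.min_dist_sub_add _ hs.le, ← dist_eq_norm,
      hF.dist_add_smul]
    exact hF.abs_sub_le_of_maximal hR cS ht hs hrz hry hKz hKzmax hKy hKymax
  · rintro h (⟨rfl, rfl⟩ | ⟨rfl, rfl⟩) hy
    · exact hF.le_of_maximal_of_endpoint hR cS rfl rfl hy hrz.le hry hKy hKzmax
    · exact hF.neg.le_of_maximal_of_endpoint hR cS (by rw [smul_neg, sub_neg_eq_add])
        (by rw [smul_neg, ← sub_eq_add_neg]) (by rwa [openSegment_symm]) hrz.le hry hKy hKzmax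

/-- Setting: `Ω ⊂ ℝ²` a bounded domain (uniform norm;
`Metric.ball` is an open axis-parallel square), `S = ball cS R ⊆ Ω`, `[a,b]` a
closed side of `S` (a segment contained in `∂S` whose endpoints are at uniform
distance `2R`).  For `z, y ∈ [a,b] ∩ Ω`, `z ≠ y`, with maximal squares
`K(z) = ball (z + (r_z/R)•(z-cS)) r_z` and `K(y)` (maximality of the radii
hypothesized):
(i) if `z, y` lie in the open side, `|r_y - r_z| ≤ (R+r_y+r_z)‖y-z‖ / dist({z,y},{a,b})`;
(ii) if `z ∈ {a,b}` and `y` is in the open side then, `h` being the other endpoint,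
`r_y ≤ r_z + (R+r_z)‖y-z‖/‖y-h‖`. -/
theorem maximal_square_radius_comparison
    (Ω : Set (ℝ × ℝ)) (hΩo : IsOpen Ω) (hΩconn : IsConnected Ω)
    (hΩbdd : Bornology.IsBounded Ω)
    (cS : ℝ × ℝ) (R : ℝ) (hR : 0 < R) (hS : Metric.ball cS R ⊆ Ω)
    (a b : ℝ × ℝ)
    (hside : segment ℝ a b ⊆ frontier (Metric.ball cS R))
    (hlen : dist a b = 2 * R)
    (z y : ℝ × ℝ) (hz : z ∈ segment ℝ a b) (hy : y ∈ segment ℝ a b)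
    (hzΩ : z ∈ Ω) (hyΩ : y ∈ Ω) (hzy : z ≠ y)
    (rz : ℝ) (hrz : 0 < rz)
    (hKz : Metric.ball (z + (rz / R) • (z - cS)) rz ⊆ Ω)
    (hKzmax : ∀ ρ : ℝ, 0 < ρ → Metric.ball (z + (ρ / R) • (z - cS)) ρ ⊆ Ω → ρ ≤ rz)
    (ry : ℝ) (hry : 0 < ry)
    (hKy : Metric.ball (y + (ry / R) • (y - cS)) ry ⊆ Ω)
    (hKymax : ∀ ρ : ℝ, 0 < ρ → Metric.ball (y + (ρ / R) • (y - cS)) ρ ⊆ Ω → ρ ≤ ry) :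
    (z ∈ openSegment ℝ a b → y ∈ openSegment ℝ a b →
      |ry - rz| ≤ (R + ry + rz) * ‖y - z‖ /
        min (min (dist z a) (dist z b)) (min (dist y a) (dist y b))) ∧
    (∀ h : ℝ × ℝ, ((z = a ∧ h = b) ∨ (z = b ∧ h = a)) → y ∈ openSegment ℝ a b →
      ry ≤ rz + (R + rz) * ‖y - z‖ / ‖y - h‖) :=
  maximal_square_radius_comparison_general Ω cS R hR a b hside hlen z y rz hrz hKz hKzmax ry hry hKy
    hKymax
end

section
/- Let Ω ⊂ ℝ² be a bounded domain, let S = S(c_S,R) ⊂ Ω be a square, let T be a connected component of ∂S ∩ Ω, let z ∈ T, and let ε > 0. Then there exists δ > 0 such that for every y ∈ T with ‖y−z‖ < δ one has K(y) ⊂ [K(z)]_ε, where [A]_ε = {u ∈ ℝ² : dist(u,A) < ε} denotes the ε-neighborhood of A. -/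
open Set Metric Filter Topology

/-! For `y` on the sphere `‖y - c‖ = R` the squares `K_r(y)` increase with `r`, and the set of
points whose ball of a fixed radius `ρ` lies in `Ω` is closed. Taking `ρ = r_z + ε/4`, maximality
gives `K_ρ(z) ⊄ Ω`, hence `K_ρ(y) ⊄ Ω` for `y` near `z`, so every admissible radius at such `y`
is at most `ρ`. The centres of `K(y)` and `K(z)` then differ by at most
`|r_y - r_z| + O(‖y - z‖)`, which places `K(y)` inside the `ε`-neighbourhood of `K(z)`. -/

theorem isClosed_setOf_ball_subset {α : Type*} [PseudoMetricSpace α] (s : Set α) (r : ℝ) :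
    IsClosed {x | ball x r ⊆ s} := by
  have : {x | ball x r ⊆ s} = ⋂ u ∈ sᶜ, {x | r ≤ dist u x} := by
    ext x
    simp only [mem_ofPred_eq, mem_iInter, mem_compl_iff, subset_def, mem_ball]
    exact forall_congr' fun u => by rw [← not_lt, not_imp_not]
  rw [this]
  exact isClosed_biInter fun u _ =>
    isClosed_le continuous_const (continuous_const.dist continuous_id)

section OutwardSquares

variable {E : Type*} [NormedAddCommGroup E] [NormedSpace ℝ E] {c y z : E} {R s t : ℝ}

theorem dist_outward_centers_le (hz : ‖z - c‖ = R) (hs : 0 ≤ s) :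
    dist (y + (s / R) • (y - c)) (z + (t / R) • (z - c)) ≤ (1 + s / R) * ‖y - z‖ + |s - t| := by
  have hR : 0 ≤ R := hz ▸ norm_nonneg _
  rw [dist_eq_norm]
  calc _ = ‖(1 + s / R) • (y - z) + ((s - t) / R) • (z - c)‖ := by congr 1; module
    _ ≤ (1 + s / R) * ‖y - z‖ + |s - t| / R * R := by
      grw [norm_add_le, norm_smul, norm_smul, hz, Real.norm_of_nonneg (by positivity),
        Real.norm_eq_abs, abs_div, abs_of_nonneg hR]
    _ ≤ (1 + s / R) * ‖y - z‖ + |s - t| := by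
      gcongr
      rcases hR.eq_or_lt with rfl | hR
      · simp
      · rw [div_mul_cancel₀ _ hR.ne']

theorem ball_outward_subset_of_le (hy : ‖y - c‖ = R) (hs : 0 ≤ s) (hst : s ≤ t) :
    ball (y + (s / R) • (y - c)) s ⊆ ball (y + (t / R) • (y - c)) t := by
  refine ball_subset_ball' ?_
  have := dist_outward_centers_le (y := y) (t := t) hy hs
  rw [sub_self, norm_zero, mul_zero, zero_add, abs_of_nonpos (by linarith)] at this
  linarith

theorem eventually_not_ball_outward_subset (c : E) (R ρ : ℝ) {Ω : Set E}
    (h : ¬ ball (z + (ρ / R) • (z - c)) ρ ⊆ Ω) :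
    ∀ᶠ y in 𝓝 z, ¬ ball (y + (ρ / R) • (y - c)) ρ ⊆ Ω :=
  ((isClosed_setOf_ball_subset Ω ρ).preimage (by fun_prop)).isOpen_compl.mem_nhds h

theorem eventually_outward_radius_le {Ω : Set E} {r ρ : ℝ}
    (hmax : ∀ ρ : ℝ, 0 < ρ → ball (z + (ρ / R) • (z - c)) ρ ⊆ Ω → ρ ≤ r)
    (hrρ : r < ρ) (hρ : 0 < ρ) :
    ∀ᶠ y in 𝓝 z, ‖y - c‖ = R →
      ∀ s, ball (y + (s / R) • (y - c)) s ⊆ Ω → s ≤ ρ := by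
  filter_upwards [eventually_not_ball_outward_subset c R ρ fun h => hrρ.not_ge (hmax ρ hρ h)]
    with y hy hyc s hs
  by_contra! hρs
  exact hy ((ball_outward_subset_of_le hyc hρ.le hρs.le).trans hs)

end OutwardSquares

theorem maximal_square_continuity_general
    (Ω : Set (ℝ × ℝ))
    (cS : ℝ × ℝ) (R : ℝ)
    (T : Set (ℝ × ℝ))
    (hT : ∃ t ∈ frontier (Metric.ball cS R) ∩ Ω,
      T = connectedComponentIn (frontier (Metric.ball cS R) ∩ Ω) t)
    (z : ℝ × ℝ) (hz : z ∈ T)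
    (rz : ℝ) (hrz : 0 < rz)
    (hKzmax : ∀ ρ : ℝ, 0 < ρ → Metric.ball (z + (ρ / R) • (z - cS)) ρ ⊆ Ω → ρ ≤ rz)
    (ε : ℝ) (hε : 0 < ε) :
    ∃ δ > 0, ∀ y ∈ T, ‖y - z‖ < δ →
      ∀ ry : ℝ, 0 < ry →
        Metric.ball (y + (ry / R) • (y - cS)) ry ⊆ Ω →
        (∀ ρ : ℝ, 0 < ρ → Metric.ball (y + (ρ / R) • (y - cS)) ρ ⊆ Ω → ρ ≤ ry) →
        Metric.ball (y + (ry / R) • (y - cS)) ry ⊆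
          Metric.thickening ε (Metric.ball (z + (rz / R) • (z - cS)) rz) := by
  obtain ⟨t, -, rfl⟩ := hT
  have on_sphere : ∀ y ∈ connectedComponentIn (frontier (ball cS R) ∩ Ω) t, ‖y - cS‖ = R :=
    fun y hy => mem_sphere_iff_norm.1 <| frontier_ball_subset_sphere <|
      (connectedComponentIn_subset _ _ hy).1
  have hR : 0 ≤ R := on_sphere z hz ▸ norm_nonneg _
  set ρ := rz + ε / 4 with hρ
  have hradius := eventually_outward_radius_le hKzmax (ρ := ρ) (by linarith) (by positivity)
  have hclose : ∀ᶠ y in 𝓝 z, (1 + ρ / R) * ‖y - z‖ < ε / 2 := by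
    have : Tendsto (fun y => (1 + ρ / R) * ‖y - z‖) (𝓝 z) (𝓝 0) := by
      simpa using (tendsto_norm_sub_self z).const_mul (1 + ρ / R)
    exact this.eventually (gt_mem_nhds (by positivity))
  obtain ⟨δ, hδ, hnear⟩ := Metric.eventually_nhds_iff.1 (hradius.and hclose)
  refine ⟨δ, hδ, fun y hy hyz ry hry hKy _ => ?_⟩
  obtain ⟨hradius_y, hclose_y⟩ := hnear (by rwa [dist_eq_norm])
  have hryρ : ry ≤ ρ := hradius_y (on_sphere y hy) ry hKy
  have hfactor : (1 + ry / R) * ‖y - z‖ ≤ (1 + ρ / R) * ‖y - z‖ := by gcongr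
  have hcenters := dist_outward_centers_le (y := y) (t := rz) (on_sphere z hz) hry.le
  rw [thickening_ball hε hrz]
  refine ball_subset_ball' ?_
  rcases le_total ry rz with h | h
  · rw [abs_of_nonpos (by linarith)] at hcenters; linarith
  · rw [abs_of_nonneg (by linarith)] at hcenters; linarith

/-- Setting: `Ω ⊂ ℝ²` a bounded domain (uniform norm;
`Metric.ball` is an open axis-parallel square), `S = ball cS R ⊆ Ω`, `T` a
connected component of `∂S ∩ Ω`, `z ∈ T`, `ε > 0`; `K(z)`, `K(y)` the maximal
squares attached to `z`, `y` (maximality of the radii hypothesized).  Then there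
is `δ > 0` such that `‖y - z‖ < δ`, `y ∈ T`, implies `K(y) ⊆ [K(z)]_ε`
(the `ε`-neighborhood, i.e. `Metric.thickening ε (K z)`). -/
theorem maximal_square_continuity
    (Ω : Set (ℝ × ℝ)) (hΩo : IsOpen Ω) (hΩconn : IsConnected Ω)
    (hΩbdd : Bornology.IsBounded Ω)
    (cS : ℝ × ℝ) (R : ℝ) (hR : 0 < R) (hS : Metric.ball cS R ⊆ Ω)
    (T : Set (ℝ × ℝ))
    (hT : ∃ t ∈ frontier (Metric.ball cS R) ∩ Ω,
      T = connectedComponentIn (frontier (Metric.ball cS R) ∩ Ω) t)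
    (z : ℝ × ℝ) (hz : z ∈ T)
    (rz : ℝ) (hrz : 0 < rz)
    (hKz : Metric.ball (z + (rz / R) • (z - cS)) rz ⊆ Ω)
    (hKzmax : ∀ ρ : ℝ, 0 < ρ → Metric.ball (z + (ρ / R) • (z - cS)) ρ ⊆ Ω → ρ ≤ rz)
    (ε : ℝ) (hε : 0 < ε) :
    ∃ δ > 0, ∀ y ∈ T, ‖y - z‖ < δ →
      ∀ ry : ℝ, 0 < ry →
        Metric.ball (y + (ry / R) • (y - cS)) ry ⊆ Ω →
        (∀ ρ : ℝ, 0 < ρ → Metric.ball (y + (ρ / R) • (y - cS)) ρ ⊆ Ω → ρ ≤ ry) →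
        Metric.ball (y + (ry / R) • (y - cS)) ry ⊆
          Metric.thickening ε (Metric.ball (z + (rz / R) • (z - cS)) rz) :=
  maximal_square_continuity_general Ω cS R T hT z hz rz hrz hKzmax ε hε
end

section
/- Let Ω ⊂ ℝ² be a domain, let K be a square, and let x, y ∈ Ω ∖ K̄. Suppose there exists a polygonal path γ joining x to y in Ω such that γ ∩ K = ∅. Then there exists a polygonal path γ̃ joining x to y in Ω such that γ̃ ∩ K̄ = ∅. -/
/-!
Pushing radially away from the centre (in the sup norm) maps the complement of the open square
onto the complement of a slightly larger open square and fixes every point outside it. If the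
larger square is chosen close enough to `K` and does not reach `x` or `y`, the push moves the
compact path `γ` so little that it stays in `Ω`, giving a continuous path from `x` to `y` in the
open set `Ω \ K̄`. In an open set, the points reachable by chains of segments form an open and
closed subset of any connected set, so this path can be replaced by a polygonal one.
-/

open Set Metric

open Relation

section NormedSpace

variable {E : Type*} [NormedAddCommGroup E] [NormedSpace ℝ E]

theorem IsPreconnected.reflTransGen_segment_subset {U s : Set E} (hU : IsOpen U)
    (hs : IsPreconnected s) (hsU : s ⊆ U) {x y : E} (hx : x ∈ s) (hy : y ∈ s) :
    ReflTransGen (fun a b => segment ℝ a b ⊆ U) x y := by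
  refine hs.induction₂' _ (fun z hz => ?_) (fun _ _ _ _ _ _ => ReflTransGen.trans) hx hy
  obtain ⟨ε, hε, hball⟩ := Metric.isOpen_iff.1 hU z (hsU hz)
  filter_upwards [nhdsWithin_le_nhds (ball_mem_nhds z hε)] with w hw
  exact ⟨.single (((convex_ball z ε).segment_subset (mem_ball_self hε) hw).trans hball),
    .single (((convex_ball z ε).segment_subset hw (mem_ball_self hε)).trans hball)⟩

noncomputable def radialPush (c : E) (s : ℝ) (z : E) : E :=
  c + (max (dist z c) s / dist z c) • (z - c)

variable {c z : E} {s : ℝ}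

theorem radialPush_of_le (h : s ≤ dist z c) : radialPush c s z = z := by
  rcases eq_or_ne z c with rfl | hz
  · simp [radialPush]
  · rw [radialPush, max_eq_left h, div_self (dist_pos.2 hz).ne', one_smul, add_sub_cancel]

theorem dist_radialPush_center (hz : z ≠ c) : dist (radialPush c s z) c = max (dist z c) s := by
  have hpos := dist_pos.2 hz
  rw [dist_eq_norm, radialPush, add_sub_cancel_left, norm_smul, ← dist_eq_norm,
    Real.norm_of_nonneg (div_nonneg (hpos.le.trans (le_max_left _ _)) hpos.le),
    div_mul_cancel₀ _ hpos.ne']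

theorem dist_radialPush_self (hz : z ≠ c) :
    dist (radialPush c s z) z = max (dist z c) s - dist z c := by
  have hpos := dist_pos.2 hz
  have : radialPush c s z - z = ((max (dist z c) s - dist z c) / dist z c) • (z - c) := by
    rw [radialPush, sub_div, div_self hpos.ne', sub_smul, one_smul]
    abel
  rw [dist_eq_norm, this, norm_smul, ← dist_eq_norm, Real.norm_of_nonneg
    (div_nonneg (sub_nonneg.2 (le_max_left _ _)) hpos.le), div_mul_cancel₀ _ hpos.ne']

theorem continuousOn_radialPush : ContinuousOn (radialPush c s) {c}ᶜ := by
  have hdist : Continuous fun z : E => dist z c := continuous_id.dist continuous_const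
  refine continuousOn_const.add (.smul ?_ (continuous_id.sub continuous_const).continuousOn)
  exact (hdist.max continuous_const).continuousOn.div hdist.continuousOn
    fun z hz => (dist_pos.2 hz).ne'

theorem JoinedIn.diff_closedBall {Ω : Set E} (hΩ : IsOpen Ω) {r : ℝ} (hr : 0 < r) {x y : E}
    (hx : x ∉ closedBall c r) (hy : y ∉ closedBall c r) (h : JoinedIn (Ω \ ball c r) x y) :
    JoinedIn (Ω \ closedBall c r) x y := by
  obtain ⟨p, hp⟩ := h
  have hK : range p ⊆ Ω \ ball c r := range_subset_iff.2 hp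
  have hKc : range p ⊆ {c}ᶜ := fun z hz hzc =>
    (hK hz).2 (by rw [mem_singleton_iff.1 hzc]; exact mem_ball_self hr)
  obtain ⟨δ, hδ, hδΩ⟩ :=
    (isCompact_range p.continuous).exists_thickening_subset_open hΩ (hK.trans sdiff_subset)
  rw [mem_closedBall, not_le] at hx hy
  obtain ⟨s, hrs, hs⟩ := exists_between (lt_min (lt_add_of_pos_right r hδ) (lt_min hx hy))
  simp only [lt_min_iff] at hs
  have hjoin := (show JoinedIn (range p) x y from ⟨p, mem_range_self⟩).map_continuousOn
    ((continuousOn_radialPush (s := s)).mono hKc)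
  rw [radialPush_of_le hs.2.1.le, radialPush_of_le hs.2.2.le] at hjoin
  refine hjoin.mono (image_subset_iff.2 fun z hz => ⟨hδΩ ?_, ?_⟩)
  · have hrz : r ≤ dist z c := not_lt.1 (hK hz).2
    rw [mem_thickening_iff]
    refine ⟨z, hz, ?_⟩
    rw [dist_radialPush_self (hKc hz)]
    calc max (dist z c) s - dist z c ≤ s - r :=
          sub_le_iff_le_add.2 (max_le (by linarith) (by linarith))
      _ < δ := by linarith
  · rw [mem_closedBall, not_le, dist_radialPush_center (hKc hz)]
    exact hrs.trans_le (le_max_right _ _)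

end NormedSpace

namespace IsPolyPath

variable {γ : Set (ℝ × ℝ)} {x y : ℝ × ℝ}

theorem joinedIn (h : IsPolyPath γ x y) : JoinedIn γ x y := by
  obtain ⟨n, p, rfl, rfl, rfl⟩ := h
  have hseg (i : Fin (n + 1)) :=
    subset_iUnion (fun i : Fin (n + 1) => segment ℝ (p i.castSucc) (p i.succ)) i
  suffices ∀ i : Fin (n + 2), JoinedIn _ (p 0) (p i) from this _
  intro i
  induction i using Fin.induction with
  | zero => exact .refl (hseg 0 (left_mem_segment ℝ _ _))
  | succ j ih => exact ih.trans (.of_segment_subset (hseg j))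

theorem union_segment (h : IsPolyPath γ x y) (z : ℝ × ℝ) :
    IsPolyPath (γ ∪ segment ℝ y z) x z := by
  obtain ⟨n, p, rfl, rfl, rfl⟩ := h
  refine ⟨n + 1, Fin.snoc p z, by rw [← Fin.castSucc_zero, Fin.snoc_castSucc], by simp, ?_⟩
  ext a
  simp [Fin.exists_fin_succ' (n := n + 1), ← Fin.castSucc_succ]

end IsPolyPath

theorem exists_isPolyPath_of_reflTransGen {U : Set (ℝ × ℝ)} {x y : ℝ × ℝ} (hx : x ∈ U)
    (h : ReflTransGen (fun a b => segment ℝ a b ⊆ U) x y) :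
    ∃ γ, IsPolyPath γ x y ∧ γ ⊆ U := by
  induction h with
  | refl => exact ⟨segment ℝ x x, ⟨0, fun _ => x, rfl, rfl, by simp⟩, by simpa using hx⟩
  | tail _ hseg ih =>
    obtain ⟨γ, hγ, hγU⟩ := ih
    exact ⟨_, hγ.union_segment _, union_subset hγU hseg⟩

theorem IsOpen.exists_isPolyPath_of_joinedIn {U : Set (ℝ × ℝ)} (hU : IsOpen U) {x y : ℝ × ℝ}
    (h : JoinedIn U x y) : ∃ γ, IsPolyPath γ x y ∧ γ ⊆ U := by
  obtain ⟨p, hp⟩ := h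
  exact exists_isPolyPath_of_reflTransGen (p.source ▸ hp 0) <|
    (isPreconnected_range p.continuous).reflTransGen_segment_subset hU (range_subset_iff.2 hp)
      ⟨0, p.source⟩ ⟨1, p.target⟩

theorem poly_path_avoiding_closed_square_general
    (Ω : Set (ℝ × ℝ)) (hΩo : IsOpen Ω)
    (c : ℝ × ℝ) (r : ℝ) (hr : 0 < r)
    (x y : ℝ × ℝ)
    (hx : x ∈ Ω \ closure (Metric.ball c r)) (hy : y ∈ Ω \ closure (Metric.ball c r))
    (hγ : ∃ γ : Set (ℝ × ℝ), IsPolyPath γ x y ∧ γ ⊆ Ω ∧ γ ∩ Metric.ball c r = ∅) :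
    ∃ γ' : Set (ℝ × ℝ), IsPolyPath γ' x y ∧ γ' ⊆ Ω ∧
      γ' ∩ closure (Metric.ball c r) = ∅ := by
  rw [closure_ball c hr.ne'] at hx hy ⊢
  obtain ⟨γ, hγpoly, hγΩ, hγK⟩ := hγ
  have hjoin : JoinedIn (Ω \ ball c r) x y :=
    hγpoly.joinedIn.mono (subset_sdiff.2 ⟨hγΩ, disjoint_iff_inter_eq_empty.2 hγK⟩)
  obtain ⟨γ', hγ'poly, hγ'sub⟩ := (hΩo.sdiff isClosed_closedBall).exists_isPolyPath_of_joinedIn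
    (hjoin.diff_closedBall hΩo hr hx.2 hy.2)
  exact ⟨γ', hγ'poly, hγ'sub.trans sdiff_subset, (subset_sdiff.1 hγ'sub).2.inter_eq⟩

/-- If two points of a domain `Ω` outside the closed square `K̄`
can be joined in `Ω` by a polygonal path avoiding the open square `K`, then they
can be joined in `Ω` by a polygonal path avoiding the closed square `K̄`. -/
theorem poly_path_avoiding_closed_square
    (Ω : Set (ℝ × ℝ)) (hΩo : IsOpen Ω) (hΩconn : IsConnected Ω)
    (c : ℝ × ℝ) (r : ℝ) (hr : 0 < r)
    (x y : ℝ × ℝ)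
    (hx : x ∈ Ω \ closure (Metric.ball c r)) (hy : y ∈ Ω \ closure (Metric.ball c r))
    (hγ : ∃ γ : Set (ℝ × ℝ), IsPolyPath γ x y ∧ γ ⊆ Ω ∧ γ ∩ Metric.ball c r = ∅) :
    ∃ γ' : Set (ℝ × ℝ), IsPolyPath γ' x y ∧ γ' ⊆ Ω ∧
      γ' ∩ closure (Metric.ball c r) = ∅ :=
  poly_path_avoiding_closed_square_general Ω hΩo c r hr x y hx hy hγ
end

section
/- Let Ω ⊂ ℝ² be a domain satisfying the arc diameter condition with some constant η ≥ 1. Let S₁, S₂ ⊂ Ω be disjoint squares such that S̄₁ ∩ S̄₂ ∩ Ω = ∅. Then S̄₁ ∩ S̄₂ contains at most one point. -/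
/-!
If the closed squares `S̄₁`, `S̄₂` share two points, then, the open squares being disjoint, they
touch along a segment of a common edge line, and `S̄₁ ∪ S̄₂` is a neighbourhood of the midpoint `w`
of that segment. Points `a ∈ S₁`, `b ∈ S₂` close to `w` are joined, by the arc diameter condition,
by a path in `Ω` of small diameter. That path stays in `S̄₁ ∪ S̄₂` and avoids `S̄₁ ∩ S̄₂`, which
lies outside `Ω`; so the two closed squares split it into two nonempty closed pieces, contradicting
connectedness.
-/

open Set Metric

/-- `Ω` satisfies the arc diameter condition with constant `η`: any two points of
`Ω` are joined by a path in `Ω` of diameter at most `η` times their distance. -/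
def ArcDiamCond (Ω : Set (ℝ × ℝ)) (η : ℝ) : Prop :=
  ∀ a ∈ Ω, ∀ b ∈ Ω, ∃ γ : Path a b, Set.range ⇑γ ⊆ Ω ∧
    Metric.diam (Set.range ⇑γ) ≤ η * dist a b

open Filter Topology

namespace Real

variable {x₁ x₂ r₁ r₂ : ℝ}

theorem disjoint_ball_iff_subsingleton_closedBall_inter :
    Disjoint (ball x₁ r₁) (ball x₂ r₂) ↔ (closedBall x₁ r₁ ∩ closedBall x₂ r₂).Subsingleton := by
  rw [Set.disjoint_iff_inter_eq_empty, ball_eq_Ioo, ball_eq_Ioo, Ioo_inter_Ioo, Ioo_eq_empty_iff,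
    closedBall_eq_Icc, closedBall_eq_Icc, Icc_inter_Icc, subsingleton_Icc_iff, not_lt]

theorem closedBall_union_mem_nhds_of_disjoint_ball (hr₁ : 0 < r₁) (hr₂ : 0 < r₂)
    (hdisj : Disjoint (ball x₁ r₁) (ball x₂ r₂)) {t : ℝ}
    (ht : t ∈ closedBall x₁ r₁ ∩ closedBall x₂ r₂) :
    closedBall x₁ r₁ ∪ closedBall x₂ r₂ ∈ 𝓝 t := by
  rw [disjoint_iff_inter_eq_empty, ball_eq_Ioo, ball_eq_Ioo, Ioo_inter_Ioo, Ioo_eq_empty_iff,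
    not_lt] at hdisj
  refine mem_nhds_iff.2 ⟨min r₁ r₂, lt_min hr₁ hr₂, fun z hz => ?_⟩
  -- the two intervals touch at `t`, one on each side, each of length at least `2 * min r₁ r₂`
  have hmin₁ := min_le_left r₁ r₂
  have hmin₂ := min_le_right r₁ r₂
  simp only [ball_eq_Ioo, closedBall_eq_Icc, mem_Ioo, mem_Icc, mem_union, mem_inter_iff] at ht hz ⊢
  rcases min_le_iff.1 hdisj with h | h <;> rcases le_max_iff.1 h with h' | h' <;>
    rcases le_total z t with hz' | hz' <;>
    first | (left; constructor <;> linarith) | (right; constructor <;> linarith)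

end Real

theorem exists_mem_closedBall_inter_closedBall_union_mem_nhds {c₁ c₂ : ℝ × ℝ} {r₁ r₂ : ℝ}
    (hr₁ : 0 < r₁) (hr₂ : 0 < r₂) (hdisj : Disjoint (ball c₁ r₁) (ball c₂ r₂))
    {p q : ℝ × ℝ} (hp : p ∈ closedBall c₁ r₁ ∩ closedBall c₂ r₂)
    (hq : q ∈ closedBall c₁ r₁ ∩ closedBall c₂ r₂) (hpq : p ≠ q) :
    ∃ w ∈ closedBall c₁ r₁ ∩ closedBall c₂ r₂, closedBall c₁ r₁ ∪ closedBall c₂ r₂ ∈ 𝓝 w := by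
  have hprod : ∀ (c : ℝ × ℝ) (r : ℝ), closedBall c r = closedBall c.1 r ×ˢ closedBall c.2 r :=
    fun c r => (closedBall_prod_same c.1 c.2 r).symm
  simp only [hprod, prod_inter_prod, mem_prod] at hp hq ⊢
  rw [← ball_prod_same c₁.1, ← ball_prod_same c₂.1, Set.disjoint_prod] at hdisj
  rcases hdisj with h | h
  · have h₁ : p.1 = q.1 := Real.disjoint_ball_iff_subsingleton_closedBall_inter.1 h hp.1 hq.1
    obtain ⟨m, hm⟩ : (ball c₁.2 r₁ ∩ ball c₂.2 r₂).Nonempty := by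
      rw [← not_disjoint_iff_nonempty_inter, Real.disjoint_ball_iff_subsingleton_closedBall_inter]
      exact fun h₂ => hpq (Prod.ext h₁ (h₂ hp.2 hq.2))
    refine ⟨(p.1, m),
      ⟨hp.1, inter_subset_inter ball_subset_closedBall ball_subset_closedBall hm⟩, ?_⟩
    filter_upwards [prod_mem_nhds (Real.closedBall_union_mem_nhds_of_disjoint_ball hr₁ hr₂ h hp.1)
      ((isOpen_ball.inter isOpen_ball).mem_nhds hm)]
    rintro ⟨x, y⟩ ⟨hx | hx, hy₁, hy₂⟩
    exacts [Or.inl ⟨hx, ball_subset_closedBall hy₁⟩, Or.inr ⟨hx, ball_subset_closedBall hy₂⟩]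
  · have h₂ : p.2 = q.2 := Real.disjoint_ball_iff_subsingleton_closedBall_inter.1 h hp.2 hq.2
    obtain ⟨m, hm⟩ : (ball c₁.1 r₁ ∩ ball c₂.1 r₂).Nonempty := by
      rw [← not_disjoint_iff_nonempty_inter, Real.disjoint_ball_iff_subsingleton_closedBall_inter]
      exact fun h₁ => hpq (Prod.ext (h₁ hp.1 hq.1) h₂)
    refine ⟨(m, p.2),
      ⟨inter_subset_inter ball_subset_closedBall ball_subset_closedBall hm, hp.2⟩, ?_⟩
    filter_upwards [prod_mem_nhds ((isOpen_ball.inter isOpen_ball).mem_nhds hm)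
      (Real.closedBall_union_mem_nhds_of_disjoint_ball hr₁ hr₂ h hp.2)]
    rintro ⟨x, y⟩ ⟨⟨hx₁, hx₂⟩, hy | hy⟩
    exacts [Or.inl ⟨ball_subset_closedBall hx₁, hy⟩, Or.inr ⟨ball_subset_closedBall hx₂, hy⟩]

theorem ArcDiamCond.exists_path_subset_ball {Ω : Set (ℝ × ℝ)} {η : ℝ} (h : ArcDiamCond Ω η)
    {U₁ U₂ : Set (ℝ × ℝ)} (hU₁ : U₁ ⊆ Ω) (hU₂ : U₂ ⊆ Ω) {w : ℝ × ℝ} (hw₁ : w ∈ closure U₁)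
    (hw₂ : w ∈ closure U₂) {δ : ℝ} (hδ : 0 < δ) :
    ∃ a ∈ U₁, ∃ b ∈ U₂, ∃ γ : Path a b, range γ ⊆ Ω ∩ ball w δ := by
  set ε := δ / (2 * |η| + 1)
  have hε : 0 < ε := by positivity
  obtain ⟨a, ha, hwa⟩ := Metric.mem_closure_iff.1 hw₁ ε hε
  obtain ⟨b, hb, hwb⟩ := Metric.mem_closure_iff.1 hw₂ ε hε
  obtain ⟨γ, hγΩ, hγ⟩ := h a (hU₁ ha) b (hU₂ hb)
  refine ⟨a, ha, b, hb, γ, fun z hz => ⟨hγΩ hz, ?_⟩⟩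
  have hab : dist a b < 2 * ε := by linarith [dist_triangle_left a b w]
  have hza : dist z a ≤ |η| * (2 * ε) :=
    calc dist z a ≤ diam (range γ) :=
          dist_le_diam_of_mem (isCompact_range γ.continuous).isBounded hz ⟨0, γ.source⟩
      _ ≤ η * dist a b := hγ
      _ ≤ |η| * (2 * ε) := mul_le_mul (le_abs_self η) hab.le dist_nonneg (abs_nonneg η)
  calc dist z w ≤ dist z a + dist w a := dist_triangle_right z w a
    _ < |η| * (2 * ε) + ε := add_lt_add_of_le_of_lt hza hwa
    _ = δ := by simp only [ε]; field_simp

theorem IsPreconnected.not_subset_closure_union {X : Type*} [TopologicalSpace X]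
    {C U₁ U₂ : Set X} (hC : IsPreconnected C) (hU₁ : IsOpen U₁) (hU₂ : IsOpen U₂)
    (hdisj : Disjoint U₁ U₂) (hC₁ : (C ∩ U₁).Nonempty) (hC₂ : (C ∩ U₂).Nonempty)
    (hK : C ∩ (closure U₁ ∩ closure U₂) = ∅) : ¬ C ⊆ closure U₁ ∪ closure U₂ := by
  intro hCK
  obtain ⟨a, haC, ha⟩ := hC₁
  obtain ⟨b, hbC, hb⟩ := hC₂
  rcases isPreconnected_iff_subset_of_disjoint_closed.1 hC _ _ isClosed_closure isClosed_closure
    hCK hK with h | h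
  · exact (hdisj.closure_left hU₂).notMem_of_mem_right hb (h hbC)
  · exact (hdisj.closure_right hU₁).notMem_of_mem_left ha (h haC)

theorem disjoint_squares_closures_meet_in_at_most_one_point_general
    (Ω : Set (ℝ × ℝ))
    (η : ℝ) (hADC : ArcDiamCond Ω η)
    (c₁ c₂ : ℝ × ℝ) (r₁ r₂ : ℝ) (hr₁ : 0 < r₁) (hr₂ : 0 < r₂)
    (hS₁ : Metric.ball c₁ r₁ ⊆ Ω) (hS₂ : Metric.ball c₂ r₂ ⊆ Ω)
    (hdisj : Metric.ball c₁ r₁ ∩ Metric.ball c₂ r₂ = ∅)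
    (hmeet : closure (Metric.ball c₁ r₁) ∩ closure (Metric.ball c₂ r₂) ∩ Ω = ∅) :
    (closure (Metric.ball c₁ r₁) ∩ closure (Metric.ball c₂ r₂)).Subsingleton := by
  rw [← disjoint_iff_inter_eq_empty] at hdisj
  intro p hp q hq
  by_contra hpq
  rw [closure_ball c₁ hr₁.ne', closure_ball c₂ hr₂.ne'] at hp hq
  obtain ⟨w, ⟨hw₁, hw₂⟩, hw⟩ :=
    exists_mem_closedBall_inter_closedBall_union_mem_nhds hr₁ hr₂ hdisj hp hq hpq
  obtain ⟨δ, hδ, hwδ⟩ := Metric.mem_nhds_iff.1 hw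
  rw [← closure_ball c₁ hr₁.ne'] at hw₁ hwδ
  rw [← closure_ball c₂ hr₂.ne'] at hw₂ hwδ
  obtain ⟨a, ha, b, hb, γ, hγ⟩ := hADC.exists_path_subset_ball hS₁ hS₂ hw₁ hw₂ hδ
  refine (isPreconnected_range γ.continuous).not_subset_closure_union isOpen_ball isOpen_ball
    hdisj ⟨a, ⟨0, γ.source⟩, ha⟩ ⟨b, ⟨1, γ.target⟩, hb⟩ ?_ (fun z hz => hwδ (hγ hz).2)
  exact subset_empty_iff.1 fun z ⟨hz, hzK⟩ => hmeet.subset ⟨hzK, (hγ hz).1⟩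

/-- `Ω ⊂ ℝ²` a domain (uniform norm; `Metric.ball` is an open
axis-parallel square) satisfying the arc diameter condition with constant `η ≥ 1`.
If `S₁, S₂ ⊆ Ω` are disjoint squares with `S̄₁ ∩ S̄₂ ∩ Ω = ∅`, then `S̄₁ ∩ S̄₂`
contains at most one point. -/
theorem disjoint_squares_closures_meet_in_at_most_one_point
    (Ω : Set (ℝ × ℝ)) (hΩo : IsOpen Ω) (hΩconn : IsConnected Ω)
    (η : ℝ) (hη : 1 ≤ η) (hADC : ArcDiamCond Ω η)
    (c₁ c₂ : ℝ × ℝ) (r₁ r₂ : ℝ) (hr₁ : 0 < r₁) (hr₂ : 0 < r₂)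
    (hS₁ : Metric.ball c₁ r₁ ⊆ Ω) (hS₂ : Metric.ball c₂ r₂ ⊆ Ω)
    (hdisj : Metric.ball c₁ r₁ ∩ Metric.ball c₂ r₂ = ∅)
    (hmeet : closure (Metric.ball c₁ r₁) ∩ closure (Metric.ball c₂ r₂) ∩ Ω = ∅) :
    (closure (Metric.ball c₁ r₁) ∩ closure (Metric.ball c₂ r₂)).Subsingleton :=
  disjoint_squares_closures_meet_in_at_most_one_point_general Ω η hADC c₁ c₂ r₁ r₂ hr₁ hr₂ hS₁ hS₂
    hdisj hmeet
end

section
/- Let Q ⊂ ℝ² be a square and let a, b ∈ Q̄ with a ≠ b. Then there exists a polygonal path γ consisting of at most two line segments which joins a to b, such that γ ∖ {a,b} ⊂ Q and, for every α ∈ (0,1], len_{α,Q}(γ) = ∫_γ dist(u, ∂Q)^{α−1} ds(u) ≤ (3/α)·‖a−b‖^α. -/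
open Set Metric

/-- The Euclidean norm of a vector of `ℝ × ℝ` (whose ambient norm is the sup norm). -/
noncomputable def euclidNorm (v : ℝ × ℝ) : ℝ := Real.sqrt (v.1 ^ 2 + v.2 ^ 2)

/-- The subhyperbolic length `∫_γ dist(u, ∂G)^(α-1) ds(u)` of the line segment
from `u` to `v`, computed with Euclidean arc length and with the uniform-norm
distance to the boundary of `G` (the ambient norm of `ℝ × ℝ` is the sup norm). -/
noncomputable def segLen (G : Set (ℝ × ℝ)) (α : ℝ) (u v : ℝ × ℝ) : ℝ :=
  ∫ t in (0:ℝ)..1,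
    Metric.infDist ((1 - t) • u + t • v) (frontier G) ^ (α - 1) * euclidNorm (v - u)

/-!
Clamp the midpoint of `a` and `b` coordinatewise into the square shrunk by `d/2`, where
`d = ‖a - b‖`; the resulting point `w` lies within `d/2` of both `a` and `b` (uniform norm)
and at distance at least `d/2` from `∂Q`. By convexity of the uniform distance, along a
segment from a point of `Q̄` to `w` the distance to `∂Q` is at least `t·d/2` at parameter `t`,
so each of the two segments has subhyperbolic length at most
`√2 (d/2) · (d/2)^(α-1) ∫₀¹ t^(α-1) dt = √2 (d/2)^α / α`; and `2√2 ≤ 3`.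
-/

open MeasureTheory

lemma euclidNorm_le_sqrt_two_mul_norm (v : ℝ × ℝ) : euclidNorm v ≤ √2 * ‖v‖ := by
  have h₁ : v.1 ^ 2 ≤ ‖v‖ ^ 2 := sq_le_sq.2 (by simpa using norm_fst_le v)
  have h₂ : v.2 ^ 2 ≤ ‖v‖ ^ 2 := sq_le_sq.2 (by simpa using norm_snd_le v)
  calc euclidNorm v ≤ √(2 * ‖v‖ ^ 2) := Real.sqrt_le_sqrt (by linarith)
    _ = √2 * ‖v‖ := by rw [Real.sqrt_mul zero_le_two, Real.sqrt_sq (norm_nonneg v)]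

lemma euclidNorm_neg (v : ℝ × ℝ) : euclidNorm (-v) = euclidNorm v := by
  simp [euclidNorm]

lemma segLen_comm (G : Set (ℝ × ℝ)) (α : ℝ) (u v : ℝ × ℝ) :
    segLen G α u v = segLen G α v u := by
  have h := intervalIntegral.integral_comp_sub_left (a := 0) (b := 1)
    (fun t => infDist ((1 - t) • v + t • u) (frontier G) ^ (α - 1) * euclidNorm (u - v)) 1
  simp only [sub_zero, sub_self, sub_sub_cancel] at h
  rw [segLen, segLen, ← h, ← neg_sub v u, euclidNorm_neg]
  simp only [add_comm]

lemma sub_dist_le_infDist_sphere {X : Type*} [PseudoMetricSpace X] {c x : X} {r : ℝ}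
    (h : (sphere c r).Nonempty) : r - dist x c ≤ infDist x (sphere c r) :=
  (le_infDist h).2 fun y hy => by
    have := dist_triangle y x c
    rw [mem_sphere.1 hy, dist_comm y] at this
    linarith

lemma mul_le_infDist_frontier_ball {E : Type*} [NormedAddCommGroup E] [NormedSpace ℝ E]
    [Nontrivial E] {c u v : E} {r δ t : ℝ} (hr : 0 < r) (hu : u ∈ closedBall c r)
    (hv : v ∈ closedBall c (r - δ)) (ht : t ∈ Icc (0:ℝ) 1) :
    t * δ ≤ infDist ((1 - t) • u + t • v) (frontier (ball c r)) := by
  rw [frontier_ball c hr.ne']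
  refine le_trans ?_ (sub_dist_le_infDist_sphere (NormedSpace.sphere_nonempty.2 hr.le))
  have hconv := (convexOn_univ_dist c).2 (mem_univ u) (mem_univ v) (sub_nonneg.2 ht.2) ht.1
    (sub_add_cancel 1 t)
  rw [mem_closedBall] at hu hv
  calc t * δ = r - ((1 - t) * r + t * (r - δ)) := by ring
    _ ≤ r - ((1 - t) * dist u c + t * dist v c) := by
      gcongr
      · exact sub_nonneg.2 ht.2
      · exact ht.1
    _ ≤ r - dist ((1 - t) • u + t • v) c := sub_le_sub_left (by simpa using hconv) r

lemma segLen_le_of_mul_le_infDist {G : Set (ℝ × ℝ)} {α δ : ℝ} {u v : ℝ × ℝ}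
    (hα : α ∈ Ioc (0:ℝ) 1) (hδ : 0 < δ)
    (h : ∀ t ∈ Ioc (0:ℝ) 1, t * δ ≤ infDist ((1 - t) • u + t • v) (frontier G)) :
    segLen G α u v ≤ euclidNorm (v - u) * δ ^ (α - 1) / α := by
  set L := euclidNorm (v - u)
  have hL : 0 ≤ L := Real.sqrt_nonneg _
  have hpointwise : ∀ t ∈ Ioc (0:ℝ) 1,
      infDist ((1 - t) • u + t • v) (frontier G) ^ (α - 1) * L ≤
        t ^ (α - 1) * (δ ^ (α - 1) * L) := fun t ht => by
    rw [← mul_assoc, ← Real.mul_rpow ht.1.le hδ.le]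
    exact mul_le_mul_of_nonneg_right
      (Real.rpow_le_rpow_of_nonpos (mul_pos ht.1 hδ) (h t ht) (by linarith [hα.2])) hL
  have hint : ∫ t in (0:ℝ)..1, t ^ (α - 1) = 1 / α := by
    rw [integral_rpow (Or.inl (by linarith [hα.1]))]
    simp [Real.zero_rpow hα.1.ne']
  calc segLen G α u v
      = ∫ t in Ioc (0:ℝ) 1, infDist ((1 - t) • u + t • v) (frontier G) ^ (α - 1) * L :=
        intervalIntegral.integral_of_le zero_le_one
    _ ≤ ∫ t in Ioc (0:ℝ) 1, t ^ (α - 1) * (δ ^ (α - 1) * L) := by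
      refine integral_mono_of_nonneg
        (.of_forall fun t => mul_nonneg (Real.rpow_nonneg infDist_nonneg _) hL) ?_ ?_
      · exact ((intervalIntegral.intervalIntegrable_rpow' (by linarith [hα.1])).mul_const _).1
      · filter_upwards [ae_restrict_mem measurableSet_Ioc] using hpointwise
    _ = L * δ ^ (α - 1) / α := by
      rw [← intervalIntegral.integral_of_le zero_le_one, intervalIntegral.integral_mul_const,
        hint]
      ring

lemma Convex.segment_diff_left_subset_interior {E : Type*} [AddCommGroup E] [Module ℝ E]
    [TopologicalSpace E] [IsTopologicalAddGroup E] [ContinuousSMul ℝ E] {s : Set E}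
    (hs : Convex ℝ s) {x y : E} (hx : x ∈ closure s) (hy : y ∈ interior s) :
    segment ℝ x y \ {x} ⊆ interior s := by
  rw [← insert_endpoints_openSegment]
  rintro z ⟨hz | hz | hz, hzx⟩
  · exact absurd hz hzx
  · exact hz ▸ hy
  · exact hs.openSegment_closure_interior_subset_interior hx hy hz

lemma Real.exists_dist_le_half_of_mem_closedBall {c x y R d : ℝ} (hx : x ∈ closedBall c R)
    (hy : y ∈ closedBall c R) (hxy : dist x y ≤ d) (hdR : d ≤ 2 * R) :
    ∃ w ∈ closedBall c (R - d / 2), dist w x ≤ d / 2 ∧ dist w y ≤ d / 2 := by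
  simp only [mem_closedBall, Real.dist_eq, abs_le] at *
  refine ⟨max (c - (R - d / 2)) (min (c + (R - d / 2)) ((x + y) / 2)), ?_⟩
  rcases max_cases (c - (R - d / 2)) (min (c + (R - d / 2)) ((x + y) / 2)) with h | h <;>
    rcases min_cases (c + (R - d / 2)) ((x + y) / 2) with h' | h' <;>
    rw [h.1] <;> refine ⟨⟨?_, ?_⟩, ⟨?_, ?_⟩, ⟨?_, ?_⟩⟩ <;> linarith

lemma Prod.exists_dist_le_half_of_mem_closedBall {c a b : ℝ × ℝ} {r : ℝ}
    (ha : a ∈ closedBall c r) (hb : b ∈ closedBall c r) :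
    ∃ w ∈ closedBall c (r - dist a b / 2), dist w a ≤ dist a b / 2 ∧ dist w b ≤ dist a b / 2 := by
  have hab : dist a b ≤ 2 * r := by
    linarith [dist_triangle_right a b c, mem_closedBall.1 ha, mem_closedBall.1 hb]
  simp only [mem_closedBall, Prod.dist_eq, max_le_iff] at ha hb ⊢
  obtain ⟨w₁, hw₁, hw₁a, hw₁b⟩ :=
    Real.exists_dist_le_half_of_mem_closedBall ha.1 hb.1 (le_max_left _ (dist a.2 b.2)) hab
  obtain ⟨w₂, hw₂, hw₂a, hw₂b⟩ :=
    Real.exists_dist_le_half_of_mem_closedBall ha.2 hb.2 (le_max_right (dist a.1 b.1) _) hab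
  exact ⟨(w₁, w₂), ⟨hw₁, hw₂⟩, ⟨hw₁a, hw₂a⟩, ⟨hw₁b, hw₂b⟩⟩

lemma segLen_ball_le {c u v : ℝ × ℝ} {r α δ : ℝ} (hα : α ∈ Ioc (0:ℝ) 1) (hδ : 0 < δ)
    (hu : u ∈ closedBall c r) (hv : v ∈ closedBall c (r - δ)) (huv : dist u v ≤ δ) :
    segLen (ball c r) α u v ≤ √2 * δ ^ α / α := by
  have hr : 0 < r := by linarith [dist_nonneg.trans (mem_closedBall.1 hv)]
  calc segLen (ball c r) α u v ≤ euclidNorm (v - u) * δ ^ (α - 1) / α :=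
        segLen_le_of_mul_le_infDist hα hδ fun t ht =>
          mul_le_infDist_frontier_ball hr hu hv (Ioc_subset_Icc_self ht)
    _ ≤ √2 * δ * δ ^ (α - 1) / α := by
      have hL : euclidNorm (v - u) ≤ √2 * δ := by
        calc euclidNorm (v - u) ≤ √2 * dist v u := by
              rw [dist_eq_norm]; exact euclidNorm_le_sqrt_two_mul_norm _
          _ ≤ √2 * δ := by rw [dist_comm]; gcongr
      have hα₀ : 0 ≤ α := hα.1.le
      gcongr
    _ = √2 * δ ^ α / α := by rw [Real.rpow_sub_one hδ.ne']; field_simp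

/-- For a square `Q = ball c r` (uniform norm) and `a ≠ b` in `Q̄`
there is a polygonal path of at most two segments, `[a,w] ∪ [w,b]`, joining `a` to
`b`, contained in `Q` except possibly for `a, b`, with
`len_{α,Q}(γ) ≤ (3/α)‖a-b‖^α` for every `α ∈ (0,1]`. -/
theorem two_segment_path_in_square
    (c : ℝ × ℝ) (r : ℝ) (hr : 0 < r)
    (a b : ℝ × ℝ) (ha : a ∈ closure (Metric.ball c r))
    (hb : b ∈ closure (Metric.ball c r)) (hab : a ≠ b) :
    ∃ w : ℝ × ℝ,
      (segment ℝ a w ∪ segment ℝ w b) \ {a, b} ⊆ Metric.ball c r ∧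
      ∀ α ∈ Set.Ioc (0:ℝ) 1,
        segLen (Metric.ball c r) α a w + segLen (Metric.ball c r) α w b ≤
          3 / α * ‖a - b‖ ^ α := by
  have ha' : a ∈ closedBall c r := closure_ball c hr.ne' ▸ ha
  have hb' : b ∈ closedBall c r := closure_ball c hr.ne' ▸ hb
  obtain ⟨w, hwc, hwa, hwb⟩ := Prod.exists_dist_le_half_of_mem_closedBall ha' hb'
  have hd : 0 < dist a b := dist_pos.2 hab
  have hw : w ∈ interior (ball c r) := by
    rw [isOpen_ball.interior_eq]; exact closedBall_subset_ball (by linarith) hwc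
  refine ⟨w, ?_, fun α hα => ?_⟩
  · rw [← isOpen_ball.interior_eq]
    rintro z ⟨hz | hz, hzab⟩
    · exact (convex_ball c r).segment_diff_left_subset_interior ha hw
        ⟨hz, fun h => hzab (.inl h)⟩
    · exact (convex_ball c r).segment_diff_left_subset_interior hb hw
        ⟨segment_symm ℝ w b ▸ hz, fun h => hzab (.inr h)⟩
  · have hα₀ : 0 ≤ α := hα.1.le
    have hsqrt : 2 * √2 ≤ 3 := by nlinarith [Real.sq_sqrt zero_le_two, Real.sqrt_nonneg 2]
    have hpow : (dist a b / 2) ^ α ≤ dist a b ^ α :=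
      Real.rpow_le_rpow (by positivity) (half_le_self hd.le) hα₀
    rw [← dist_eq_norm, segLen_comm _ _ w b]
    calc segLen (ball c r) α a w + segLen (ball c r) α b w
        ≤ √2 * (dist a b / 2) ^ α / α + √2 * (dist a b / 2) ^ α / α :=
          add_le_add (segLen_ball_le hα (by linarith) ha' hwc (dist_comm a w ▸ hwa))
            (segLen_ball_le hα (by linarith) hb' hwc (dist_comm b w ▸ hwb))
      _ = 2 * √2 * (dist a b / 2) ^ α / α := by ring
      _ ≤ 3 * dist a b ^ α / α := by gcongr
      _ = 3 / α * dist a b ^ α := by ring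
end

section
/- Let K, K₁, K₂ ⊂ ℝ² be pairwise disjoint squares such that K̄ ∩ K̄₁ ≠ ∅, K̄ ∩ K̄₂ ≠ ∅, and K̄₁ ∩ K̄₂ contains at most one point. Let ε be a number with 0 < ε ≤ diam K. Then there exists a square K̃ ⊂ K such that K̃̄ ∩ K̄₁ ≠ ∅ and K̃̄ ∩ K̄₂ ≠ ∅, and such that diam K̃ ≤ 2·dist(K₁, K₂) if K̄₁ ∩ K̄₂ = ∅, while diam K̃ = ε if K̄₁ ∩ K̄₂ ≠ ∅. Moreover, for each j ∈ {1,2}: if K̄ⱼ ∩ K̄ contains more than one point, then K̄ⱼ ∩ K̃̄ contains more than one point. -/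
open Set Metric

noncomputable def setDist (A B : Set (ℝ × ℝ)) : ℝ :=
  sInf ((fun q : (ℝ × ℝ) × (ℝ × ℝ) => dist q.1 q.2) '' (A ×ˢ B))

/-!
In the uniform norm a closed square is a product of two closed intervals, and the contact
set of two closed squares is the product of the contact sets of their projections. It
therefore suffices to place a window `[m - t, m + t]` inside each projection `[k - R, k + R]`
of `K̄` so that it still meets the projections of `K̄₁` and `K̄₂`, along a nondegenerate
interval whenever `[k - R, k + R]` does. A window centred at a point `c` with
`|c - a| < ρ + t` overlaps `(a - ρ, a + ρ)`, and pushing it back into `[k - R, k + R]` keeps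
this overlap. Such a `c` exists for both neighbours as soon as `|a - b| < ρ + σ + 2t`, i.e.
when `2t` exceeds the gap between them: take `2t = ε` if `K̄₁` and `K̄₂` touch, and
`2t = 2 dist(K₁, K₂)` (or `K̃ = K` if this exceeds `diam K`) otherwise.
-/

def InheritsContact {α : Type*} (W X A : Set α) : Prop :=
  (W ∩ A).Nonempty ∧ (¬(A ∩ X).Subsingleton → ¬(A ∩ W).Subsingleton)

lemma Set.not_subsingleton_prod_of_left {α β : Type*} {s : Set α} {t : Set β}
    (hs : ¬s.Subsingleton) (ht : t.Nonempty) : ¬(s ×ˢ t).Subsingleton := by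
  obtain ⟨z, hz⟩ := ht
  exact fun h => hs fun x hx y hy => congrArg Prod.fst (h (mk_mem_prod hx hz) (mk_mem_prod hy hz))

lemma Set.not_subsingleton_prod_of_right {α β : Type*} {s : Set α} {t : Set β} (hs : s.Nonempty)
    (ht : ¬t.Subsingleton) : ¬(s ×ˢ t).Subsingleton := by
  obtain ⟨z, hz⟩ := hs
  exact fun h => ht fun x hx y hy => congrArg Prod.snd (h (mk_mem_prod hz hx) (mk_mem_prod hz hy))

lemma InheritsContact.prod {α β : Type*} {W X A : Set α} {W' X' A' : Set β}
    (h : InheritsContact W X A) (h' : InheritsContact W' X' A') :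
    InheritsContact (W ×ˢ W') (X ×ˢ X') (A ×ˢ A') := by
  refine ⟨by rw [prod_inter_prod]; exact h.1.prod h'.1, fun hX => ?_⟩
  rw [prod_inter_prod] at hX ⊢
  by_cases hA : (A ∩ X).Subsingleton
  · have hA' : ¬(A' ∩ X').Subsingleton := fun hA' => hX (hA.prod hA')
    exact not_subsingleton_prod_of_right (inter_comm W A ▸ h.1) (h'.2 hA')
  · exact not_subsingleton_prod_of_left (h.2 hA) (inter_comm W' A' ▸ h'.1)

lemma inheritsContact_Icc_clamp {k R a ρ t c : ℝ} (ht : 0 < t) (htR : t ≤ R)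
    (hA : (Icc (k - R) (k + R) ∩ Icc (a - ρ) (a + ρ)).Nonempty) (hc : |c - a| < ρ + t) :
    InheritsContact (Icc (max (k - R + t) (min (k + R - t) c) - t)
      (max (k - R + t) (min (k + R - t) c) + t)) (Icc (k - R) (k + R)) (Icc (a - ρ) (a + ρ)) := by
  set m := max (k - R + t) (min (k + R - t) c) with hm_def
  have hm : (m = k - R + t ∧ c ≤ m) ∨ m = c ∨ (m = k + R - t ∧ m ≤ c) := by
    rcases le_or_gt c (k - R + t) with h | h
    · exact Or.inl ⟨max_eq_left ((min_le_right _ _).trans h), h.trans (le_max_left _ _)⟩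
    rcases le_or_gt c (k + R - t) with h' | h'
    · exact Or.inr (Or.inl (by rw [hm_def, min_eq_right h', max_eq_right h.le]))
    · refine Or.inr (Or.inr ⟨?_, ?_⟩) <;> rw [hm_def, min_eq_left h'.le, max_eq_right (by linarith)]
      exact h'.le
  rw [abs_lt] at hc
  simp only [InheritsContact, Icc_inter_Icc, nonempty_Icc, subsingleton_Icc_iff, not_le,
    max_le_iff, le_min_iff, lt_min_iff, max_lt_iff] at hA ⊢
  refine ⟨⟨⟨?_, ?_⟩, ?_, ?_⟩, fun ⟨⟨h₁, h₂⟩, h₃, _⟩ => ⟨⟨h₁, ?_⟩, ?_, ?_⟩⟩ <;>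
    rcases hm with ⟨hm, _⟩ | hm | ⟨hm, _⟩ <;> linarith

lemma exists_Icc_inheritsContact {k R a ρ b σ t : ℝ} (ht : 0 < t) (htR : t ≤ R)
    (hA : (Icc (k - R) (k + R) ∩ Icc (a - ρ) (a + ρ)).Nonempty)
    (hB : (Icc (k - R) (k + R) ∩ Icc (b - σ) (b + σ)).Nonempty)
    (hab : dist a b < ρ + σ + 2 * t) :
    ∃ m, dist m k ≤ R - t ∧
      InheritsContact (Icc (m - t) (m + t)) (Icc (k - R) (k + R)) (Icc (a - ρ) (a + ρ)) ∧
      InheritsContact (Icc (m - t) (m + t)) (Icc (k - R) (k + R)) (Icc (b - σ) (b + σ)) := by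
  obtain ⟨c, hca, hcb⟩ : ∃ c, |c - a| < ρ + t ∧ |c - b| < σ + t := by
    have hρ : a - ρ ≤ a + ρ := nonempty_Icc.1 (hA.mono inter_subset_right)
    have hσ : b - σ ≤ b + σ := nonempty_Icc.1 (hB.mono inter_subset_right)
    rw [Real.dist_eq, abs_lt] at hab
    obtain ⟨c, hc₁, hc₂⟩ := exists_between
      (show max (a - ρ - t) (b - σ - t) < min (a + ρ + t) (b + σ + t) by
        simp only [max_lt_iff, lt_min_iff]; refine ⟨⟨?_, ?_⟩, ?_, ?_⟩ <;> linarith)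
    simp only [max_lt_iff, lt_min_iff] at hc₁ hc₂
    exact ⟨c, abs_lt.2 ⟨by linarith, by linarith⟩, abs_lt.2 ⟨by linarith, by linarith⟩⟩
  refine ⟨max (k - R + t) (min (k + R - t) c), Real.dist_eq _ _ ▸ abs_le.2 ⟨?_, ?_⟩,
    inheritsContact_Icc_clamp ht htR hA hca, inheritsContact_Icc_clamp ht htR hB hcb⟩
  · linarith [le_max_left (k - R + t) (min (k + R - t) c)]
  · linarith [max_le (by linarith : k - R + t ≤ k + R - t) (min_le_left (k + R - t) c)]

lemma closure_ball_inter_closure_ball_nonempty_iff {E : Type*} [NormedAddCommGroup E]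
    [NormedSpace ℝ E] {x y : E} {r s : ℝ} (hr : 0 < r) (hs : 0 < s) :
    (closure (ball x r) ∩ closure (ball y s)).Nonempty ↔ dist x y ≤ r + s := by
  rw [closure_ball x hr.ne', closure_ball y hs.ne', ← not_disjoint_iff_nonempty_inter,
    disjoint_closedBall_closedBall_iff hr.le hs.le, not_lt]

lemma closure_ball_eq_Icc_prod {c : ℝ × ℝ} {r : ℝ} (hr : 0 < r) :
    closure (ball c r) = Icc (c.1 - r) (c.1 + r) ×ˢ Icc (c.2 - r) (c.2 + r) := by
  rw [closure_ball c hr.ne', ← closedBall_prod_same, Real.closedBall_eq_Icc,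
    Real.closedBall_eq_Icc]

lemma dist_sub_le_setDist_ball {c₁ c₂ : ℝ × ℝ} {r₁ r₂ : ℝ} (hr₁ : 0 < r₁) (hr₂ : 0 < r₂) :
    dist c₁ c₂ - (r₁ + r₂) ≤ setDist (ball c₁ r₁) (ball c₂ r₂) := by
  refine le_csInf (((nonempty_ball.2 hr₁).prod (nonempty_ball.2 hr₂)).image _) ?_
  rintro _ ⟨⟨p, q⟩, ⟨hp, hq⟩, rfl⟩
  have := dist_triangle4 c₁ p q c₂
  rw [mem_ball'] at hp
  rw [mem_ball] at hq
  dsimp only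
  linarith

lemma exists_ball_inheritsContact {cK c₁ c₂ : ℝ × ℝ} {rK r₁ r₂ t : ℝ} (hrK : 0 < rK)
    (hr₁ : 0 < r₁) (hr₂ : 0 < r₂) (ht : 0 < t) (htK : t ≤ rK)
    (hm₁ : (closure (ball cK rK) ∩ closure (ball c₁ r₁)).Nonempty)
    (hm₂ : (closure (ball cK rK) ∩ closure (ball c₂ r₂)).Nonempty)
    (hgap : dist c₁ c₂ < r₁ + r₂ + 2 * t) :
    ∃ c', ball c' t ⊆ ball cK rK ∧
      InheritsContact (closure (ball c' t)) (closure (ball cK rK)) (closure (ball c₁ r₁)) ∧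
      InheritsContact (closure (ball c' t)) (closure (ball cK rK)) (closure (ball c₂ r₂)) := by
  simp only [closure_ball_eq_Icc_prod hrK, closure_ball_eq_Icc_prod hr₁,
    closure_ball_eq_Icc_prod hr₂, prod_inter_prod, prod_nonempty_iff] at hm₁ hm₂
  rw [Prod.dist_eq, max_lt_iff] at hgap
  obtain ⟨m₁, hk₁, hA₁, hB₁⟩ := exists_Icc_inheritsContact ht htK hm₁.1 hm₂.1 hgap.1
  obtain ⟨m₂, hk₂, hA₂, hB₂⟩ := exists_Icc_inheritsContact ht htK hm₁.2 hm₂.2 hgap.2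
  have hcK : dist (m₁, m₂) cK ≤ rK - t := max_le hk₁ hk₂
  refine ⟨(m₁, m₂), ball_subset_ball' (by linarith), ?_, ?_⟩
  all_goals rw [closure_ball_eq_Icc_prod ht, closure_ball_eq_Icc_prod hrK]
  · rw [closure_ball_eq_Icc_prod hr₁]; exact hA₁.prod hA₂
  · rw [closure_ball_eq_Icc_prod hr₂]; exact hB₁.prod hB₂

theorem intermediate_square_general
    (cK c₁ c₂ : ℝ × ℝ) (rK r₁ r₂ : ℝ) (hrK : 0 < rK) (hr₁ : 0 < r₁) (hr₂ : 0 < r₂)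
    (hm1 : (closure (Metric.ball cK rK) ∩ closure (Metric.ball c₁ r₁)).Nonempty)
    (hm2 : (closure (Metric.ball cK rK) ∩ closure (Metric.ball c₂ r₂)).Nonempty)
    (ε : ℝ) (hε : 0 < ε) (hεK : ε ≤ Metric.diam (Metric.ball cK rK)) :
    ∃ (c' : ℝ × ℝ) (r' : ℝ), 0 < r' ∧
      Metric.ball c' r' ⊆ Metric.ball cK rK ∧
      (closure (Metric.ball c' r') ∩ closure (Metric.ball c₁ r₁)).Nonempty ∧
      (closure (Metric.ball c' r') ∩ closure (Metric.ball c₂ r₂)).Nonempty ∧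
      (closure (Metric.ball c₁ r₁) ∩ closure (Metric.ball c₂ r₂) = ∅ →
        Metric.diam (Metric.ball c' r') ≤
          2 * setDist (Metric.ball c₁ r₁) (Metric.ball c₂ r₂)) ∧
      ((closure (Metric.ball c₁ r₁) ∩ closure (Metric.ball c₂ r₂)).Nonempty →
        Metric.diam (Metric.ball c' r') = ε) ∧
      (¬ (closure (Metric.ball c₁ r₁) ∩ closure (Metric.ball cK rK)).Subsingleton →
        ¬ (closure (Metric.ball c₁ r₁) ∩ closure (Metric.ball c' r')).Subsingleton) ∧
      (¬ (closure (Metric.ball c₂ r₂) ∩ closure (Metric.ball cK rK)).Subsingleton →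
        ¬ (closure (Metric.ball c₂ r₂) ∩ closure (Metric.ball c' r')).Subsingleton) := by
  rw [diam_ball_eq cK hrK.le] at hεK
  have h12 := closure_ball_inter_closure_ball_nonempty_iff (x := c₁) (y := c₂) hr₁ hr₂
  rcases le_or_gt (dist c₁ c₂) (r₁ + r₂) with hmeet | hsep
  · obtain ⟨c', hsub, h₁, h₂⟩ := exists_ball_inheritsContact (t := ε / 2) hrK hr₁ hr₂
      (by linarith) (by linarith) hm1 hm2 (by linarith)
    exact ⟨c', ε / 2, by linarith, hsub, h₁.1, h₂.1, fun h => absurd h (h12.2 hmeet).ne_empty,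
      fun _ => by rw [diam_ball_eq c' (by linarith)]; ring, h₁.2, h₂.2⟩
  set D := setDist (ball c₁ r₁) (ball c₂ r₂)
  have hD : dist c₁ c₂ - (r₁ + r₂) ≤ D := dist_sub_le_setDist_ball hr₁ hr₂
  have hdisj : ¬(closure (ball c₁ r₁) ∩ closure (ball c₂ r₂)).Nonempty :=
    mt h12.1 (not_le.2 hsep)
  rcases le_or_gt rK D with hKD | hDK
  · exact ⟨cK, rK, hrK, subset_rfl, hm1, hm2,
      fun _ => by rw [diam_ball_eq cK hrK.le]; linarith, (absurd · hdisj), id, id⟩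
  · obtain ⟨c', hsub, h₁, h₂⟩ := exists_ball_inheritsContact (t := D) hrK hr₁ hr₂
      (by linarith) hDK.le hm1 hm2 (by linarith)
    exact ⟨c', D, by linarith, hsub, h₁.1, h₂.1,
      fun _ => (diam_ball_eq c' (by linarith)).le, (absurd · hdisj), h₁.2, h₂.2⟩

/-- Let `K, K₁, K₂` be pairwise disjoint squares (uniform norm)
with `K̄ ∩ K̄₁ ≠ ∅`, `K̄ ∩ K̄₂ ≠ ∅` and `K̄₁ ∩ K̄₂` at most a point, and let
`0 < ε ≤ diam K`.  Then there is a square `K̃ ⊆ K` whose closure meets both `K̄₁`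
and `K̄₂`, with `diam K̃ ≤ 2 dist(K₁,K₂)` if `K̄₁ ∩ K̄₂ = ∅` and `diam K̃ = ε` if
`K̄₁ ∩ K̄₂ ≠ ∅`; moreover for `j = 1,2`, if `K̄ⱼ ∩ K̄` has more than one point then
so does `K̄ⱼ ∩ K̃̄`. -/
theorem intermediate_square
    (cK c₁ c₂ : ℝ × ℝ) (rK r₁ r₂ : ℝ) (hrK : 0 < rK) (hr₁ : 0 < r₁) (hr₂ : 0 < r₂)
    (hd01 : Metric.ball cK rK ∩ Metric.ball c₁ r₁ = ∅)
    (hd02 : Metric.ball cK rK ∩ Metric.ball c₂ r₂ = ∅)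
    (hd12 : Metric.ball c₁ r₁ ∩ Metric.ball c₂ r₂ = ∅)
    (hm1 : (closure (Metric.ball cK rK) ∩ closure (Metric.ball c₁ r₁)).Nonempty)
    (hm2 : (closure (Metric.ball cK rK) ∩ closure (Metric.ball c₂ r₂)).Nonempty)
    (h12 : (closure (Metric.ball c₁ r₁) ∩ closure (Metric.ball c₂ r₂)).Subsingleton)
    (ε : ℝ) (hε : 0 < ε) (hεK : ε ≤ Metric.diam (Metric.ball cK rK)) :
    ∃ (c' : ℝ × ℝ) (r' : ℝ), 0 < r' ∧
      Metric.ball c' r' ⊆ Metric.ball cK rK ∧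
      (closure (Metric.ball c' r') ∩ closure (Metric.ball c₁ r₁)).Nonempty ∧
      (closure (Metric.ball c' r') ∩ closure (Metric.ball c₂ r₂)).Nonempty ∧
      (closure (Metric.ball c₁ r₁) ∩ closure (Metric.ball c₂ r₂) = ∅ →
        Metric.diam (Metric.ball c' r') ≤
          2 * setDist (Metric.ball c₁ r₁) (Metric.ball c₂ r₂)) ∧
      ((closure (Metric.ball c₁ r₁) ∩ closure (Metric.ball c₂ r₂)).Nonempty →
        Metric.diam (Metric.ball c' r') = ε) ∧
      (¬ (closure (Metric.ball c₁ r₁) ∩ closure (Metric.ball cK rK)).Subsingleton →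
        ¬ (closure (Metric.ball c₁ r₁) ∩ closure (Metric.ball c' r')).Subsingleton) ∧
      (¬ (closure (Metric.ball c₂ r₂) ∩ closure (Metric.ball cK rK)).Subsingleton →
        ¬ (closure (Metric.ball c₂ r₂) ∩ closure (Metric.ball c' r')).Subsingleton) :=
  intermediate_square_general cK c₁ c₂ rK r₁ r₂ hrK hr₁ hr₂ hm1 hm2 ε hε hεK
end

section
/- Let Ω ⊂ ℝ² be a domain, let α ∈ (0,1], and let Q₁,…,Q_k ⊂ Ω (k ≥ 1) be squares such that for each n ∈ {1,…,k−1}: Qₙ and Qₙ₊₁ are touching squares, and either (a) Q̄ₙ ∩ Q̄ₙ₊₁ is a nondegenerate closed segment [sₙ,tₙ] whose open part (sₙ,tₙ) is contained in Ω, or (b) Q̄ₙ ∩ Q̄ₙ₊₁ is a single point wₙ and there exists a square centered at wₙ which is contained in Ω. Let x be the center of Q₁ and let y ∈ Q̄_k ∩ Ω. Then d_{α,Ω}(x,y) ≤ (12/α)·Σ_{n=1}^{k} (diam Qₙ)^α. -/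
/-!
A straight segment from the center `c` of a square `ball c r ⊆ Ω` to a point of its closure
stays at distance at least `r (1 - t)` from `∂Ω` at time `t`, and its Euclidean speed is at most
`2 r`, so its subhyperbolic length is at most `2 r ^ α ∫₀¹ (1 - t) ^ (α - 1) dt = (2 / α) r ^ α`.
Either alternative of the touching condition provides a common boundary point of consecutive
squares lying in `Ω`, so consecutive centers are joined through it; the final square is joined
to `y` in the same way. Every square is used at most twice, which gives
`(4 / α) ∑ (diam Qₙ) ^ α`.
-/

open Set Metric

/-- The subhyperbolic distance `d_{α,Ω}(x,y)`: the infimum of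
`∫_γ dist(u,∂Ω)^(α-1) ds(u)` (Euclidean arc length, uniform-norm distance to the
boundary) over rectifiable (Lipschitz-parametrized) curves joining `x` to `y`
inside `Ω`. -/
noncomputable def dSH (Ω : Set (ℝ × ℝ)) (α : ℝ) (x y : ℝ × ℝ) : ℝ :=
  sInf {L : ℝ | ∃ γ : ℝ → ℝ × ℝ, (∃ K : NNReal, LipschitzWith K γ) ∧
    γ 0 = x ∧ γ 1 = y ∧ (∀ t ∈ Set.Icc (0:ℝ) 1, γ t ∈ Ω) ∧
    L = ∫ t in (0:ℝ)..1,
      Metric.infDist (γ t) (frontier Ω) ^ (α - 1) * euclidNorm (deriv γ t)}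

open MeasureTheory

lemma rpow_infDist_le {X : Type*} [PseudoMetricSpace X] {s : Set X} {x : X} {ρ β : ℝ}
    (hρ : 0 < ρ) (hβ : β ≤ 0) (hs : ∀ w ∈ s, ρ ≤ dist x w) : infDist x s ^ β ≤ ρ ^ β := by
  rcases s.eq_empty_or_nonempty with rfl | hne
  · rcases hβ.lt_or_eq with hβ | rfl
    · rw [infDist_empty, Real.zero_rpow hβ.ne]
      positivity
    · simp
  · exact Real.rpow_le_rpow_of_nonpos hρ ((le_infDist hne).2 hs) hβ

lemma le_dist_of_ball_subset_of_mem_frontier {X : Type*} [PseudoMetricSpace X] {s : Set X}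
    {c w : X} {r : ℝ} (hball : ball c r ⊆ s) (hw : w ∈ frontier s) : r ≤ dist w c := by
  by_contra! h
  exact hw.2 (interior_maximal hball isOpen_ball (mem_ball.2 h))

lemma intervalIntegrable_one_sub_rpow {β : ℝ} (hβ : -1 < β) :
    IntervalIntegrable (fun t : ℝ => (1 - t) ^ β) volume 0 1 := by
  simpa using
    ((intervalIntegral.intervalIntegrable_rpow' hβ (a := 0) (b := 1)).comp_sub_left 1).symm

lemma integral_one_sub_rpow {α : ℝ} (hα : 0 < α) :
    ∫ t in (0:ℝ)..1, (1 - t) ^ (α - 1) = 1 / α := by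
  rw [intervalIntegral.integral_comp_sub_left (fun t => t ^ (α - 1)),
    integral_rpow (Or.inl (by linarith))]
  simp [Real.zero_rpow hα.ne']

lemma intervalIntegrable_and_integral_eq_of_eqOn_half {f g : ℝ → ℝ} {a : ℝ}
    (hf : IntervalIntegrable f volume 0 1)
    (hg : EqOn g (fun t => 2 * f (2 * t - a)) (Ioo (a / 2) ((a + 1) / 2))) :
    IntervalIntegrable g volume (a / 2) ((a + 1) / 2) ∧
      ∫ t in a / 2..(a + 1) / 2, g t = ∫ t in (0:ℝ)..1, f t := by
  have hle : a / 2 ≤ (a + 1) / 2 := by linarith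
  have hint : IntervalIntegrable (fun t => 2 * f (2 * t - a)) volume (a / 2) ((a + 1) / 2) := by
    have := ((hf.comp_sub_right a).comp_mul_left (c := 2)).const_mul 2
    simpa [add_comm] using this
  refine ⟨hint.congr_uIoo (by rw [uIoo_of_le hle]; exact hg.symm), ?_⟩
  rw [intervalIntegral.integral_congr_Ioo_of_le hle hg, intervalIntegral.integral_const_mul,
    intervalIntegral.integral_comp_mul_sub f two_ne_zero]
  norm_num [mul_div_cancel₀]
  ring

lemma sum_range_mul_add_succ_le {ρ : ℕ → ℝ} {a : ℝ} {k : ℕ} (ha : 0 ≤ a) (h₀ : 0 ≤ ρ 0)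
    (hk : ρ k = 0) :
    ∑ n ∈ Finset.range k, a * (ρ n + ρ (n + 1)) ≤ 2 * a * ∑ n ∈ Finset.range k, ρ n := by
  have hshift := Finset.sum_range_succ' ρ k
  rw [Finset.sum_range_succ, hk] at hshift
  have hle : ∑ n ∈ Finset.range k, ρ (n + 1) ≤ ∑ n ∈ Finset.range k, ρ n := by linarith
  rw [← Finset.mul_sum, Finset.sum_add_distrib]
  nlinarith [mul_le_mul_of_nonneg_left hle ha]

lemma inter_closure_inter_nonempty {E : Type*} [NormedAddCommGroup E] [NormedSpace ℝ E]
    {A B Ω : Set E}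
    (h : (∃ s t : E, s ≠ t ∧ closure A ∩ closure B = segment ℝ s t ∧ openSegment ℝ s t ⊆ Ω) ∨
      (∃ w : E, closure A ∩ closure B = {w} ∧ ∃ ρ : ℝ, 0 < ρ ∧ ball w ρ ⊆ Ω)) :
    (closure A ∩ closure B ∩ Ω).Nonempty := by
  rcases h with ⟨s, t, -, hAB, hΩ⟩ | ⟨w, hAB, ρ, hρ, hΩ⟩
  · have hmid := midpoint_mem_openSegment (𝕜 := ℝ) s t
    exact ⟨_, hAB ▸ openSegment_subset_segment ℝ s t hmid, hΩ hmid⟩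
  · exact ⟨w, hAB ▸ rfl, hΩ (mem_ball_self hρ)⟩

lemma euclidNorm_smul (a : ℝ) (v : ℝ × ℝ) : euclidNorm (a • v) = |a| * euclidNorm v := by
  simp only [euclidNorm, Prod.smul_fst, Prod.smul_snd, smul_eq_mul]
  rw [← Real.sqrt_sq_eq_abs, ← Real.sqrt_mul (sq_nonneg a)]
  ring_nf

lemma euclidNorm_le_two_mul_norm (v : ℝ × ℝ) : euclidNorm v ≤ 2 * ‖v‖ := by
  have h₁ : |v.1| ≤ ‖v‖ := norm_fst_le v
  have h₂ : |v.2| ≤ ‖v‖ := norm_snd_le v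
  rw [euclidNorm, Real.sqrt_le_left (by positivity)]
  nlinarith [sq_abs v.1, sq_abs v.2, abs_nonneg v.1, abs_nonneg v.2]

noncomputable def shDensity (Ω : Set (ℝ × ℝ)) (α : ℝ) (γ : ℝ → ℝ × ℝ) (t : ℝ) : ℝ :=
  infDist (γ t) (frontier Ω) ^ (α - 1) * euclidNorm (deriv γ t)

section Density

variable {Ω : Set (ℝ × ℝ)} {α : ℝ}

lemma shDensity_nonneg (γ : ℝ → ℝ × ℝ) (t : ℝ) : 0 ≤ shDensity Ω α γ t :=
  mul_nonneg (Real.rpow_nonneg infDist_nonneg _) (Real.sqrt_nonneg _)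

lemma shDensity_congr {γ γ' : ℝ → ℝ × ℝ} {t : ℝ} (h : γ =ᶠ[nhds t] γ') :
    shDensity Ω α γ t = shDensity Ω α γ' t := by
  rw [shDensity, shDensity, h.deriv_eq, h.eq_of_nhds]

lemma shDensity_comp_mul_sub (γ : ℝ → ℝ × ℝ) (a b t : ℝ) :
    shDensity Ω α (fun s => γ (a * s - b)) t = |a| * shDensity Ω α γ (a * t - b) := by
  have hderiv : deriv (fun s => γ (a * s - b)) t = a • deriv γ (a * t - b) := by
    rw [← deriv_comp_sub_const γ b (a * t)]
    exact deriv_comp_mul_left a (fun u => γ (u - b)) t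
  rw [shDensity, shDensity, hderiv, euclidNorm_smul]
  ring

lemma shDensity_comp_const_sub (γ : ℝ → ℝ × ℝ) (t : ℝ) :
    shDensity Ω α (fun s => γ (1 - s)) t = shDensity Ω α γ (1 - t) := by
  simpa [neg_add_eq_sub] using shDensity_comp_mul_sub (Ω := Ω) (α := α) γ (-1) (-1) t

lemma hasDerivAt_const_add_smul (c v : ℝ × ℝ) (t : ℝ) :
    HasDerivAt (fun s : ℝ => c + s • v) v t := by
  simpa using ((hasDerivAt_id t).smul_const v).const_add c

lemma shDensity_const_add_smul (c v : ℝ × ℝ) (t : ℝ) :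
    shDensity Ω α (fun s => c + s • v) t =
      infDist (c + t • v) (frontier Ω) ^ (α - 1) * euclidNorm v := by
  rw [shDensity, (hasDerivAt_const_add_smul c v t).deriv]

/-- Along the segment the distance to `∂Ω` is at least `r (1 - t)`. -/
lemma shDensity_const_add_smul_le {c v : ℝ × ℝ} {r t : ℝ} (hα₁ : α ≤ 1) (hr : 0 < r)
    (hball : ball c r ⊆ Ω) (hv : ‖v‖ ≤ r) (ht : t ∈ Ioo (0:ℝ) 1) :
    shDensity Ω α (fun s => c + s • v) t ≤ 2 * r ^ α * (1 - t) ^ (α - 1) := by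
  have hpos : 0 < r * (1 - t) := by nlinarith [ht.2]
  have hfar : ∀ w ∈ frontier Ω, r * (1 - t) ≤ dist (c + t • v) w := fun w hw => by
    have hnear : dist (c + t • v) c ≤ t * r := by
      rw [dist_self_add_left, norm_smul, Real.norm_of_nonneg ht.1.le]
      exact mul_le_mul_of_nonneg_left hv ht.1.le
    linarith [dist_triangle w (c + t • v) c, dist_comm w (c + t • v),
      le_dist_of_ball_subset_of_mem_frontier hball hw]
  calc shDensity Ω α (fun s => c + s • v) t ≤ (r * (1 - t)) ^ (α - 1) * (2 * r) := by
        rw [shDensity_const_add_smul]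
        exact mul_le_mul (rpow_infDist_le hpos (by linarith) hfar)
          ((euclidNorm_le_two_mul_norm v).trans (by linarith)) (Real.sqrt_nonneg _)
          (Real.rpow_nonneg hpos.le _)
    _ = 2 * r ^ α * (1 - t) ^ (α - 1) := by
        rw [Real.mul_rpow hr.le (by linarith [ht.2]), Real.rpow_sub_one hr.ne']
        field_simp

end Density

/-- Written with `min` and `max` rather than by cases, so that it is Lipschitz by composition. -/
def concatCurve (γ₁ γ₂ : ℝ → ℝ × ℝ) (t : ℝ) : ℝ × ℝ :=
  γ₁ (min (2 * t) 1) + (γ₂ (max (2 * t - 1) 0) - γ₂ 0)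

section Concat

variable {γ₁ γ₂ : ℝ → ℝ × ℝ}

lemma concatCurve_of_le {t : ℝ} (ht : t ≤ 1 / 2) : concatCurve γ₁ γ₂ t = γ₁ (2 * t) := by
  simp [concatCurve, min_eq_left (by linarith : 2 * t ≤ 1),
    max_eq_right (by linarith : 2 * t - 1 ≤ 0)]

lemma concatCurve_of_ge (h : γ₁ 1 = γ₂ 0) {t : ℝ} (ht : 1 / 2 ≤ t) :
    concatCurve γ₁ γ₂ t = γ₂ (2 * t - 1) := by
  simp [concatCurve, min_eq_right (by linarith : 1 ≤ 2 * t),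
    max_eq_left (by linarith : 0 ≤ 2 * t - 1), h]

lemma lipschitzWith_concatCurve {K₁ K₂ : NNReal} (h₁ : LipschitzWith K₁ γ₁)
    (h₂ : LipschitzWith K₂ γ₂) : ∃ K : NNReal, LipschitzWith K (concatCurve γ₁ γ₂) := by
  have hdouble : LipschitzWith ‖(2:ℝ)‖₊ (fun t : ℝ => 2 * t) := lipschitzWith_smul (2:ℝ)
  exact ⟨_, (h₁.comp (hdouble.min_const 1)).add
    ((h₂.comp ((hdouble.sub (LipschitzWith.const 1)).max_const 0)).sub (LipschitzWith.const _))⟩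

end Concat

/-- Integrability is required so that lengths add up under concatenation: `dSH` itself gives a
non-integrable curve the junk length `0`. -/
def SHJoined (Ω : Set (ℝ × ℝ)) (α : ℝ) (x y : ℝ × ℝ) (L : ℝ) : Prop :=
  ∃ γ : ℝ → ℝ × ℝ, (∃ K : NNReal, LipschitzWith K γ) ∧ γ 0 = x ∧ γ 1 = y ∧
    (∀ t ∈ Icc (0:ℝ) 1, γ t ∈ Ω) ∧ IntervalIntegrable (shDensity Ω α γ) volume 0 1 ∧
    ∫ t in (0:ℝ)..1, shDensity Ω α γ t ≤ L

namespace SHJoined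

variable {Ω : Set (ℝ × ℝ)} {α : ℝ} {x y z : ℝ × ℝ} {L L₁ L₂ : ℝ}

lemma dSH_le (h : SHJoined Ω α x y L) : dSH Ω α x y ≤ L := by
  obtain ⟨γ, hLip, h0, h1, hΩ, -, hL⟩ := h
  refine le_trans (csInf_le ⟨0, ?_⟩ ?_) hL
  · rintro _ ⟨γ', -, -, -, -, rfl⟩
    exact intervalIntegral.integral_nonneg zero_le_one fun t _ => shDensity_nonneg γ' t
  · exact ⟨γ, hLip, h0, h1, hΩ, rfl⟩

lemma refl (hx : x ∈ Ω) : SHJoined Ω α x x 0 := by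
  have hzero : shDensity Ω α (fun _ => x) = fun _ => 0 := by
    funext t
    simp [shDensity, euclidNorm]
  refine ⟨fun _ => x, ⟨0, LipschitzWith.const x⟩, rfl, rfl, fun _ _ => hx, ?_, ?_⟩ <;>
    rw [hzero]
  · exact intervalIntegrable_const
  · simp

lemma mono {L' : ℝ} (h : SHJoined Ω α x y L) (hL : L ≤ L') : SHJoined Ω α x y L' := by
  obtain ⟨γ, hLip, h0, h1, hΩ, hint, hlen⟩ := h
  exact ⟨γ, hLip, h0, h1, hΩ, hint, hlen.trans hL⟩

lemma symm (h : SHJoined Ω α x y L) : SHJoined Ω α y x L := by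
  obtain ⟨γ, ⟨K, hK⟩, h0, h1, hΩ, hint, hlen⟩ := h
  have hdens : shDensity Ω α (fun s => γ (1 - s)) = fun t => shDensity Ω α γ (1 - t) :=
    funext (shDensity_comp_const_sub γ)
  refine ⟨fun s => γ (1 - s), ⟨_, hK.comp ((LipschitzWith.const 1).sub LipschitzWith.id)⟩,
    by simpa using h1, by simpa using h0,
    fun t ht => hΩ _ ⟨by linarith [ht.2], by linarith [ht.1]⟩, ?_, ?_⟩
  · rw [hdens]
    simpa using (hint.comp_sub_left 1).symm
  · rw [hdens, intervalIntegral.integral_comp_sub_left (shDensity Ω α γ) 1]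
    simpa using hlen

lemma trans (h₁ : SHJoined Ω α x y L₁) (h₂ : SHJoined Ω α y z L₂) :
    SHJoined Ω α x z (L₁ + L₂) := by
  obtain ⟨γ₁, ⟨K₁, hK₁⟩, h₁0, h₁1, hΩ₁, hint₁, hlen₁⟩ := h₁
  obtain ⟨γ₂, ⟨K₂, hK₂⟩, h₂0, h₂1, hΩ₂, hint₂, hlen₂⟩ := h₂
  have hjoin : γ₁ 1 = γ₂ 0 := h₁1.trans h₂0.symm
  have hleft : EqOn (shDensity Ω α (concatCurve γ₁ γ₂)) (fun t => 2 * shDensity Ω α γ₁ (2 * t - 0))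
      (Ioo (0 / 2) ((0 + 1) / 2)) := by
    intro t ht
    have hev : concatCurve γ₁ γ₂ =ᶠ[nhds t] fun s => γ₁ (2 * s - 0) := by
      filter_upwards [Iio_mem_nhds (show t < 1 / 2 by linarith [ht.2])] with s hs
      simpa using concatCurve_of_le hs.le
    rw [shDensity_congr hev, shDensity_comp_mul_sub]
    norm_num
  have hright : EqOn (shDensity Ω α (concatCurve γ₁ γ₂)) (fun t => 2 * shDensity Ω α γ₂ (2 * t - 1))
      (Ioo (1 / 2) ((1 + 1) / 2)) := by
    intro t ht
    have hev : concatCurve γ₁ γ₂ =ᶠ[nhds t] fun s => γ₂ (2 * s - 1) := by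
      filter_upwards [Ioi_mem_nhds ht.1] with s hs
      exact concatCurve_of_ge hjoin (le_of_lt hs)
    rw [shDensity_congr hev, shDensity_comp_mul_sub]
    norm_num
  obtain ⟨hintl, hl⟩ := intervalIntegrable_and_integral_eq_of_eqOn_half hint₁ hleft
  obtain ⟨hintr, hr⟩ := intervalIntegrable_and_integral_eq_of_eqOn_half hint₂ hright
  norm_num at hintl hl hintr hr
  refine ⟨concatCurve γ₁ γ₂, lipschitzWith_concatCurve hK₁ hK₂, ?_, ?_, ?_, hintl.trans hintr, ?_⟩
  · rw [concatCurve_of_le (by norm_num)]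
    simpa using h₁0
  · rw [concatCurve_of_ge hjoin (by norm_num)]
    norm_num [h₂1]
  · intro t ht
    rcases le_total t (1 / 2) with ht' | ht'
    · rw [concatCurve_of_le ht']
      exact hΩ₁ _ ⟨by linarith [ht.1], by linarith⟩
    · rw [concatCurve_of_ge hjoin ht']
      exact hΩ₂ _ ⟨by linarith, by linarith [ht.2]⟩
  · rw [← intervalIntegral.integral_add_adjacent_intervals hintl hintr, hl, hr]
    exact add_le_add hlen₁ hlen₂

lemma chain {p : ℕ → ℝ × ℝ} {b : ℕ → ℝ} (hp : p 0 ∈ Ω) {m : ℕ}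
    (h : ∀ n < m, SHJoined Ω α (p n) (p (n + 1)) (b n)) :
    SHJoined Ω α (p 0) (p m) (∑ n ∈ Finset.range m, b n) := by
  induction m with
  | zero => simpa using refl hp
  | succ m ih =>
    rw [Finset.sum_range_succ]
    exact (ih fun n hn => h n (by omega)).trans (h m (by omega))

lemma of_mem_closedBall {c p : ℝ × ℝ} {r : ℝ} (hα₀ : 0 < α) (hα₁ : α ≤ 1) (hr : 0 < r)
    (hball : ball c r ⊆ Ω) (hp : p ∈ closedBall c r) (hpΩ : p ∈ Ω) :
    SHJoined Ω α c p (2 / α * r ^ α) := by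
  set v := p - c
  have hv : ‖v‖ ≤ r := by rwa [← dist_eq_norm]
  have hbound := fun t (ht : t ∈ Ioo (0:ℝ) 1) =>
    shDensity_const_add_smul_le (Ω := Ω) hα₁ hr hball hv ht
  have hmajorant : IntervalIntegrable (fun t => 2 * r ^ α * (1 - t) ^ (α - 1)) volume 0 1 :=
    (intervalIntegrable_one_sub_rpow (by linarith)).const_mul _
  have hint : IntervalIntegrable (shDensity Ω α fun s => c + s • v) volume 0 1 := by
    refine hmajorant.mono_fun' ?_ ?_
    · have hcont : Continuous fun t : ℝ => infDist (c + t • v) (frontier Ω) :=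
        (continuous_infDist_pt _).comp (by fun_prop)
      rw [funext (shDensity_const_add_smul c v)]
      exact ((hcont.measurable.pow_const _).mul_const _).aestronglyMeasurable
    · rw [uIoc_of_le zero_le_one, ← Measure.restrict_congr_set Ioo_ae_eq_Ioc]
      filter_upwards [ae_restrict_mem measurableSet_Ioo] with t ht
      rw [Real.norm_of_nonneg (shDensity_nonneg _ t)]
      exact hbound t ht
  have hmem : ∀ t ∈ Icc (0:ℝ) 1, c + t • v ∈ Ω := by
    intro t ht
    rcases ht.2.lt_or_eq with ht₁ | rfl
    · refine hball (mem_ball.2 ?_)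
      rw [dist_self_add_left, norm_smul, Real.norm_of_nonneg ht.1]
      nlinarith [norm_nonneg v, ht.1]
    · simpa [v] using hpΩ
  have hderiv := hasDerivAt_const_add_smul c v
  refine ⟨_, ⟨_, lipschitzWith_of_nnnorm_deriv_le (fun t => (hderiv t).differentiableAt)
    fun t => by rw [(hderiv t).deriv]⟩, by simp, by simp [v], hmem, hint, ?_⟩
  calc ∫ t in (0:ℝ)..1, shDensity Ω α (fun s => c + s • v) t
      ≤ ∫ t in (0:ℝ)..1, 2 * r ^ α * (1 - t) ^ (α - 1) :=
        intervalIntegral.integral_mono_on_of_le_Ioo zero_le_one hint hmajorant hbound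
    _ = 2 / α * r ^ α := by
        rw [intervalIntegral.integral_const_mul, integral_one_sub_rpow hα₀]
        ring

lemma of_mem_closure_ball {c p : ℝ × ℝ} {r : ℝ}
    (hα₀ : 0 < α) (hα₁ : α ≤ 1) (hr : 0 < r) (hball : ball c r ⊆ Ω)
    (hp : p ∈ closure (ball c r)) (hpΩ : p ∈ Ω) :
    SHJoined Ω α c p (2 / α * diam (ball c r) ^ α) := by
  refine (of_mem_closedBall hα₀ hα₁ hr hball (closure_ball_subset_closedBall hp) hpΩ).mono ?_
  gcongr
  rw [diam_ball_eq c hr.le]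
  linarith

end SHJoined

/-- Let `Ω ⊂ ℝ²` be a domain (uniform norm; `Metric.ball` is an
open axis-parallel square), `α ∈ (0,1]`, and `Q₀,…,Q_{k-1} ⊆ Ω` squares such that
consecutive squares are touching and their closures meet either in a nondegenerate
segment whose open part lies in `Ω`, or in a single point at which some square
inside `Ω` is centered.  If `x` is the center of `Q₀` and `y ∈ Q̄_{k-1} ∩ Ω`, then
`d_{α,Ω}(x,y) ≤ (12/α) Σₙ (diam Qₙ)^α`. -/
theorem chain_of_squares_dSH_bound
    (Ω : Set (ℝ × ℝ))
    (α : ℝ) (hα : α ∈ Set.Ioc (0:ℝ) 1)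
    (k : ℕ) (hk : 0 < k)
    (c : Fin k → ℝ × ℝ) (r : Fin k → ℝ) (hr : ∀ i, 0 < r i)
    (hsub : ∀ i, Metric.ball (c i) (r i) ⊆ Ω)
    (hchain : ∀ (n : ℕ) (hn : n + 1 < k),
      Metric.ball (c ⟨n, by omega⟩) (r ⟨n, by omega⟩) ∩
        Metric.ball (c ⟨n + 1, hn⟩) (r ⟨n + 1, hn⟩) = ∅ ∧
      ((∃ s t : ℝ × ℝ, s ≠ t ∧
          closure (Metric.ball (c ⟨n, by omega⟩) (r ⟨n, by omega⟩)) ∩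
            closure (Metric.ball (c ⟨n + 1, hn⟩) (r ⟨n + 1, hn⟩)) = segment ℝ s t ∧
          openSegment ℝ s t ⊆ Ω) ∨
        (∃ w : ℝ × ℝ,
          closure (Metric.ball (c ⟨n, by omega⟩) (r ⟨n, by omega⟩)) ∩
            closure (Metric.ball (c ⟨n + 1, hn⟩) (r ⟨n + 1, hn⟩)) = {w} ∧
          ∃ ρ : ℝ, 0 < ρ ∧ Metric.ball w ρ ⊆ Ω)))
    (y : ℝ × ℝ)
    (hy : y ∈ closure (Metric.ball (c ⟨k - 1, by omega⟩) (r ⟨k - 1, by omega⟩)) ∩ Ω) :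
    dSH Ω α (c ⟨0, hk⟩) y ≤
      12 / α * ∑ i : Fin k, Metric.diam (Metric.ball (c i) (r i)) ^ α := by
  obtain ⟨hα₀, hα₁⟩ := hα
  let p : ℕ → ℝ × ℝ := fun n => if h : n < k then c ⟨n, h⟩ else y
  let ρ : ℕ → ℝ := fun n => if h : n < k then diam (ball (c ⟨n, h⟩) (r ⟨n, h⟩)) ^ α else 0
  have hcenter : ∀ n (hn : n < k) q, q ∈ closure (ball (c ⟨n, hn⟩) (r ⟨n, hn⟩)) → q ∈ Ω →
      SHJoined Ω α (p n) q (2 / α * ρ n) := fun n hn q hq hqΩ => by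
    simpa only [p, ρ, dif_pos hn] using .of_mem_closure_ball hα₀ hα₁ (hr _) (hsub _) hq hqΩ
  have hstep : ∀ n < k, SHJoined Ω α (p n) (p (n + 1)) (2 / α * (ρ n + ρ (n + 1))) := by
    intro n hn
    by_cases hn' : n + 1 < k
    · obtain ⟨q, ⟨hq, hq'⟩, hqΩ⟩ := inter_closure_inter_nonempty (hchain n hn').2
      rw [mul_add]
      exact (hcenter n hn q hq hqΩ).trans (hcenter (n + 1) hn' q hq' hqΩ).symm
    · obtain rfl : n = k - 1 := by omega
      simpa only [p, ρ, dif_neg hn', add_zero] using hcenter _ hn y hy.1 hy.2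
  have hwalk := SHJoined.chain (p := p) (by simpa [p, hk] using hsub _ (mem_ball_self (hr _)))
    hstep
  simp only [p, dif_pos hk, lt_irrefl, dif_neg, not_false_eq_true] at hwalk
  calc dSH Ω α (c ⟨0, hk⟩) y ≤ ∑ n ∈ Finset.range k, 2 / α * (ρ n + ρ (n + 1)) := hwalk.dSH_le
    _ ≤ 2 * (2 / α) * ∑ n ∈ Finset.range k, ρ n :=
        sum_range_mul_add_succ_le (by positivity)
          (by simpa only [ρ, dif_pos hk] using Real.rpow_nonneg diam_nonneg α)
          (dif_neg (lt_irrefl k))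
    _ = 4 / α * ∑ i : Fin k, diam (ball (c i) (r i)) ^ α := by
        rw [Finset.sum_range]
        simp only [ρ, Fin.is_lt, dif_pos]
        ring
    _ ≤ 12 / α * ∑ i : Fin k, diam (ball (c i) (r i)) ^ α := by
        gcongr
        norm_num
end

section
/- Let p > 2, let N ⊂ ℝ² be a domain, let x* ∈ N, and let Q₁,…,Q_k be pairwise disjoint squares contained in N. Define w : N → [0,∞) by w(z) = (diam Q_i)^{1/(1−p)} for z ∈ Q_i (i = 1,…,k) and w(z) = 0 for z ∈ N ∖ (Q₁ ∪ … ∪ Q_k), and define φ(z) = inf_γ ∫_{γ⁽¹⁾} w ds, the infimum being taken over all axis-parallel polygonal paths γ ⊂ N joining x* to z, where γ⁽¹⁾ denotes the union of the edges of γ parallel to the z₁-axis and ds is arc length. Then: φ is real-valued and locally Lipschitz on N; φ(a) = φ(b) whenever [a,b] ⊂ N is a line segment parallel to the z₂-axis (so the almost-everywhere defined partial derivative ∂φ/∂z₂ vanishes a.e. on N); and ∫_N |∂φ/∂z₁(z)|^p dz ≤ Σ_{i=1}^{k} (diam Q_i)^{(p−2)/(p−1)}. -/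
open Set Metric MeasureTheory

/-- `p` is the list of vertices of an axis-parallel polygonal path inside `N`
from `x` to `z`. -/
def IsAxisPolyIn (N : Set (ℝ × ℝ)) (x z : ℝ × ℝ) {n : ℕ} (p : Fin (n + 1) → ℝ × ℝ) : Prop :=
  p 0 = x ∧ p (Fin.last n) = z ∧
    (∀ i : Fin n, segment ℝ (p i.castSucc) (p i.succ) ⊆ N) ∧
    (∀ i : Fin n, (p i.castSucc).1 = (p i.succ).1 ∨ (p i.castSucc).2 = (p i.succ).2)

/-- `∫_{γ⁽¹⁾} w ds`: the arc-length integral of `w` over the union of the edges of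
the axis-parallel polygonal path with vertices `p` which are parallel to the
`z₁`-axis (vertical edges contribute `0`). -/
noncomputable def wLen1 (w : ℝ × ℝ → ℝ) {n : ℕ} (p : Fin (n + 1) → ℝ × ℝ) : ℝ :=
  ∑ i : Fin n, |∫ t in ((p i.castSucc).1)..((p i.succ).1), w (t, (p i.castSucc).2)|

/-!
Appending an axis-parallel segment `[z, z']` to a path ending at `z` produces a path ending at `z'`
and adds `|∫ w|` over the horizontal part of the segment to its cost; since this works in both
directions, `φ` changes by at most that amount along any axis-parallel segment of `N`. Hence `φ`
is constant on vertical segments, and on a square `S ⊆ N` it is Lipschitz with constant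
`sup_S |w|` (go horizontally to a corner, then vertically). The weight is locally constant off
the (null) boundaries of the squares, so `|∂φ/∂z₁| ≤ w` almost everywhere, and
`∫_N w^p ≤ Σᵢ |Qᵢ| (diam Qᵢ)^{p/(1-p)} = Σᵢ (diam Qᵢ)^{(p-2)/(p-1)}`.
-/

lemma Fin.forall_snoc_castSucc_succ {α : Type*} {R : α → α → Prop} {n : ℕ}
    {q : Fin (n + 1) → α} {a : α} (hq : ∀ i : Fin n, R (q i.castSucc) (q i.succ))
    (ha : R (q (Fin.last n)) a) :
    ∀ i : Fin (n + 1), R (Fin.snoc (α := fun _ => α) q a i.castSucc)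
      (Fin.snoc (α := fun _ => α) q a i.succ) := by
  refine Fin.lastCases ?_ fun i => ?_
  · simpa only [Fin.succ_last, Fin.snoc_castSucc, Fin.snoc_last] using ha
  · simpa only [Fin.succ_castSucc, Fin.snoc_castSucc] using hq i

lemma IsAxisPolyIn.snoc {N : Set (ℝ × ℝ)} {x z z' : ℝ × ℝ} {n : ℕ} {q : Fin (n + 1) → ℝ × ℝ}
    (hq : IsAxisPolyIn N x z q) (hseg : segment ℝ z z' ⊆ N) (hax : z.1 = z'.1 ∨ z.2 = z'.2) :
    IsAxisPolyIn N x z' (Fin.snoc q z' : Fin (n + 1 + 1) → ℝ × ℝ) := by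
  obtain ⟨h0, rfl, hsub, hpar⟩ := hq
  refine ⟨?_, Fin.snoc_last _ _,
    Fin.forall_snoc_castSucc_succ (R := fun u v => segment ℝ u v ⊆ N) hsub hseg,
    Fin.forall_snoc_castSucc_succ (R := fun u v : ℝ × ℝ => u.1 = v.1 ∨ u.2 = v.2) hpar hax⟩
  rw [← h0, ← Fin.castSucc_zero, Fin.snoc_castSucc]

lemma wLen1_snoc (w : ℝ × ℝ → ℝ) {n : ℕ} (q : Fin (n + 1) → ℝ × ℝ) (z' : ℝ × ℝ) :
    wLen1 w (Fin.snoc q z' : Fin (n + 1 + 1) → ℝ × ℝ) =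
      wLen1 w q + |∫ t in (q (Fin.last n)).1..z'.1, w (t, (q (Fin.last n)).2)| := by
  simp only [wLen1, Fin.sum_univ_castSucc, Fin.succ_castSucc, Fin.snoc_castSucc, Fin.succ_last,
    Fin.snoc_last]

lemma abs_sInf_sub_sInf_le {S T : Set ℝ} {c : ℝ} (hc : 0 ≤ c) (hS : BddBelow S)
    (hT : BddBelow T) (hST : ∀ L ∈ S, L + c ∈ T) (hTS : ∀ L ∈ T, L + c ∈ S) :
    |sInf T - sInf S| ≤ c := by
  rcases S.eq_empty_or_nonempty with rfl | hSne
  · obtain rfl : T = ∅ := eq_empty_of_forall_notMem fun L hL => hTS L hL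
    simpa using hc
  have hTne : T.Nonempty := hSne.image (· + c) |>.mono (image_subset_iff.2 hST)
  have hle {A B : Set ℝ} (hB : BddBelow B) (hA : A.Nonempty) (hAB : ∀ L ∈ A, L + c ∈ B) :
      sInf B - c ≤ sInf A :=
    le_csInf hA fun L hL => sub_le_iff_le_add.2 (csInf_le hB (hAB L hL))
  rw [abs_sub_le_iff]
  constructor <;> linarith [hle hT hSne hST, hle hS hTne hTS]

/-- Through `sInf ∅ = 0`, this is `0` at points not joined to `x` by an axis-parallel path in
`N`. -/
noncomputable def axisDist (N : Set (ℝ × ℝ)) (x : ℝ × ℝ) (w : ℝ × ℝ → ℝ) (z : ℝ × ℝ) : ℝ :=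
  sInf {L : ℝ | ∃ (n : ℕ) (q : Fin (n + 1) → ℝ × ℝ), IsAxisPolyIn N x z q ∧ L = wLen1 w q}

section axisDist

variable {N : Set (ℝ × ℝ)} {x : ℝ × ℝ} {w : ℝ × ℝ → ℝ}

lemma abs_integral_fst_symm {z z' : ℝ × ℝ} (hax : z.1 = z'.1 ∨ z.2 = z'.2) :
    |∫ t in z'.1..z.1, w (t, z'.2)| = |∫ t in z.1..z'.1, w (t, z.2)| := by
  rcases hax with h | h
  · simp [h]
  · rw [intervalIntegral.integral_symm, abs_neg, h]

lemma abs_axisDist_sub_le {z z' : ℝ × ℝ} (hseg : segment ℝ z z' ⊆ N)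
    (hax : z.1 = z'.1 ∨ z.2 = z'.2) :
    |axisDist N x w z' - axisDist N x w z| ≤ |∫ t in z.1..z'.1, w (t, z.2)| := by
  have hbdd (y : ℝ × ℝ) : BddBelow {L : ℝ | ∃ (n : ℕ) (q : Fin (n + 1) → ℝ × ℝ),
      IsAxisPolyIn N x y q ∧ L = wLen1 w q} := by
    refine ⟨0, ?_⟩
    rintro _ ⟨n, q, -, rfl⟩
    exact Finset.sum_nonneg fun _ _ => abs_nonneg _
  refine abs_sInf_sub_sInf_le (abs_nonneg _) (hbdd z) (hbdd z') ?_ ?_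
  · rintro _ ⟨n, q, hq, rfl⟩
    refine ⟨n + 1, _, hq.snoc hseg hax, ?_⟩
    rw [wLen1_snoc, hq.2.1]
  · rintro _ ⟨n, q, hq, rfl⟩
    refine ⟨n + 1, _, hq.snoc (segment_symm ℝ z z' ▸ hseg) (hax.imp Eq.symm Eq.symm), ?_⟩
    rw [wLen1_snoc, hq.2.1, abs_integral_fst_symm hax]

lemma axisDist_eq_of_fst_eq {a b : ℝ × ℝ} (h : a.1 = b.1) (hseg : segment ℝ a b ⊆ N) :
    axisDist N x w a = axisDist N x w b := by
  have := abs_axisDist_sub_le (x := x) (w := w) hseg (.inl h)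
  rw [h, intervalIntegral.integral_same, abs_zero, abs_nonpos_iff, sub_eq_zero] at this
  exact this.symm

lemma abs_axisDist_sub_le_mul {z₁ z₁' z₂ C : ℝ} (hseg : segment ℝ (z₁, z₂) (z₁', z₂) ⊆ N)
    (hw : ∀ y ∈ segment ℝ (z₁, z₂) (z₁', z₂), ‖w y‖ ≤ C) :
    |axisDist N x w (z₁', z₂) - axisDist N x w (z₁, z₂)| ≤ C * |z₁' - z₁| := by
  refine (abs_axisDist_sub_le hseg (.inr rfl)).trans <|
    intervalIntegral.norm_integral_le_of_norm_le_const fun t ht => hw _ ?_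
  rw [← Prod.image_mk_segment_left]
  exact mem_image_of_mem _ (segment_eq_uIcc (𝕜 := ℝ) z₁ z₁' ▸ uIoc_subset_uIcc ht)

lemma lipschitzOnWith_axisDist {z : ℝ × ℝ} {ε : ℝ} {K : NNReal} (hB : ball z ε ⊆ N)
    (hw : ∀ y ∈ ball z ε, ‖w y‖₊ ≤ K) : LipschitzOnWith K (axisDist N x w) (ball z ε) := by
  refine LipschitzOnWith.of_dist_le_mul fun b hb a ha => ?_
  set m : ℝ × ℝ := (b.1, a.2)
  have hm : m ∈ ball z ε := by
    rw [mem_ball, Prod.dist_eq] at ha hb ⊢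
    exact max_lt (lt_of_le_of_lt (le_max_left _ _) hb) (lt_of_le_of_lt (le_max_right _ _) ha)
  have ham := (convex_ball z ε).segment_subset ha hm
  have hmb := (convex_ball z ε).segment_subset hm hb
  rw [Real.dist_eq, ← axisDist_eq_of_fst_eq (a := m) (b := b) rfl (hmb.trans hB)]
  calc |axisDist N x w m - axisDist N x w a|
      ≤ K * |b.1 - a.1| := abs_axisDist_sub_le_mul (ham.trans hB) fun y hy =>
        mod_cast hw y (ham hy)
    _ ≤ K * dist b a := by
      gcongr
      exact (Real.dist_eq _ _).symm.trans_le (le_max_left _ _)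

lemma abs_fderiv_axisDist_apply_le {z : ℝ × ℝ} {ε : ℝ} {K : NNReal} (hε : 0 < ε)
    (hB : ball z ε ⊆ N) (hw : ∀ y ∈ ball z ε, ‖w y‖₊ ≤ K) :
    |fderiv ℝ (axisDist N x w) z (1, 0)| ≤ K := by
  have hnorm := norm_fderiv_le_of_lipschitzOn ℝ (ball_mem_nhds z hε)
    (lipschitzOnWith_axisDist (x := x) hB hw)
  simpa using (fderiv ℝ (axisDist N x w) z).le_of_opNorm_le hnorm ((1 : ℝ), (0 : ℝ))

end axisDist

section IsStepOnBalls

variable {ι : Type*} {N : Set (ℝ × ℝ)} {c : ι → ℝ × ℝ} {r a : ι → ℝ} {w : ℝ × ℝ → ℝ}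

def IsStepOnBalls (N : Set (ℝ × ℝ)) (c : ι → ℝ × ℝ) (r a : ι → ℝ) (w : ℝ × ℝ → ℝ) : Prop :=
  (∀ i, ∀ z ∈ ball (c i) (r i), w z = a i) ∧ ∀ z ∈ N \ ⋃ i, ball (c i) (r i), w z = 0

namespace IsStepOnBalls

lemma exists_ball_subset_forall_eq [Finite ι] (hw : IsStepOnBalls N c r a w) (hN : IsOpen N)
    {z : ℝ × ℝ} (hz : z ∈ N) (hzs : ∀ i, z ∉ sphere (c i) (r i)) :
    ∃ ε > 0, ball z ε ⊆ N ∧ ∀ y ∈ ball z ε, w y = w z := by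
  by_cases hzQ : ∃ i, z ∈ ball (c i) (r i)
  · obtain ⟨i, hi⟩ := hzQ
    obtain ⟨ε, hε, hsub⟩ := Metric.isOpen_iff.mp (hN.inter isOpen_ball) z ⟨hz, hi⟩
    exact ⟨ε, hε, fun y hy => (hsub hy).1, fun y hy => by rw [hw.1 i y (hsub hy).2, hw.1 i z hi]⟩
  · push Not at hzQ
    have hzc : z ∉ ⋃ i, closedBall (c i) (r i) := by
      simp only [mem_iUnion, ← ball_union_sphere, mem_union, not_exists, not_or]
      exact fun i => ⟨hzQ i, hzs i⟩
    have hU : IsOpen (N \ ⋃ i, closedBall (c i) (r i)) :=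
      hN.sdiff (isClosed_iUnion_of_finite fun _ => isClosed_closedBall)
    obtain ⟨ε, hε, hsub⟩ := Metric.isOpen_iff.mp hU z ⟨hz, hzc⟩
    refine ⟨ε, hε, fun y hy => (hsub hy).1, fun y hy => ?_⟩
    have hyQ : y ∉ ⋃ i, ball (c i) (r i) :=
      fun h => (hsub hy).2 (iUnion_mono (fun _ => ball_subset_closedBall) h)
    rw [hw.2 y ⟨(hsub hy).1, hyQ⟩, hw.2 z ⟨hz, by simpa using hzQ⟩]

lemma nnnorm_le_sum [Fintype ι] (hw : IsStepOnBalls N c r a w) {z : ℝ × ℝ} (hz : z ∈ N) :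
    ‖w z‖₊ ≤ ∑ i, ‖a i‖₊ := by
  by_cases hzQ : z ∈ ⋃ i, ball (c i) (r i)
  · obtain ⟨i, hi⟩ := mem_iUnion.mp hzQ
    rw [hw.1 i z hi]
    exact Finset.single_le_sum (f := fun j => ‖a j‖₊) (fun j _ => zero_le) (Finset.mem_univ i)
  · simp [hw.2 z ⟨hz, hzQ⟩]

lemma norm_rpow_le_sum_indicator [Fintype ι] (hw : IsStepOnBalls N c r a w) {p : ℝ}
    (hp : 0 < p) {z : ℝ × ℝ} (hz : z ∈ N) :
    ‖w z‖ ^ p ≤ ∑ i, (ball (c i) (r i)).indicator (fun _ => ‖a i‖ ^ p) z := by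
  have hnonneg (i : ι) : 0 ≤ (ball (c i) (r i)).indicator (fun _ => ‖a i‖ ^ p) z :=
    indicator_nonneg (fun _ _ => by positivity) z
  by_cases hzQ : z ∈ ⋃ i, ball (c i) (r i)
  · obtain ⟨i, hi⟩ := mem_iUnion.mp hzQ
    calc ‖w z‖ ^ p = (ball (c i) (r i)).indicator (fun _ => ‖a i‖ ^ p) z := by
          rw [indicator_of_mem hi, hw.1 i z hi]
      _ ≤ _ := Finset.single_le_sum (fun j _ => hnonneg j) (Finset.mem_univ i)
  · rw [hw.2 z ⟨hz, hzQ⟩, norm_zero, Real.zero_rpow hp.ne']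
    exact Finset.sum_nonneg fun i _ => hnonneg i

theorem integral_abs_fderiv_axisDist_rpow_le [Fintype ι] (hw : IsStepOnBalls N c r a w)
    {p : ℝ} (hp : 0 < p) (hN : IsOpen N) (x : ℝ × ℝ) :
    ∫ z in N, |fderiv ℝ (axisDist N x w) z (1, 0)| ^ p ≤
      ∑ i, volume.real (ball (c i) (r i)) * ‖a i‖ ^ p := by
  set g : ℝ × ℝ → ℝ := fun z => ∑ i, (ball (c i) (r i)).indicator (fun _ => ‖a i‖ ^ p) z
  have hint (i : ι) : Integrable ((ball (c i) (r i)).indicator fun _ => ‖a i‖ ^ p) :=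
    (integrable_indicator_iff measurableSet_ball).2 (integrableOn_const measure_ball_lt_top.ne)
  have hg : Integrable g := integrable_finsetSum _ fun i _ => hint i
  have hspheres : ∀ᵐ z, z ∉ ⋃ i, sphere (c i) (r i) := measure_eq_zero_iff_ae_notMem.1 <|
    measure_iUnion_null fun i => Measure.addHaar_sphere volume (c i) (r i)
  have hbound : ∀ᵐ z ∂volume.restrict N, |fderiv ℝ (axisDist N x w) z (1, 0)| ^ p ≤ g z := by
    filter_upwards [ae_restrict_mem hN.measurableSet, ae_restrict_of_ae hspheres] with z hz hzs
    obtain ⟨ε, hε, hB, hconst⟩ := hw.exists_ball_subset_forall_eq hN hz (by simpa using hzs)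
    have hderiv := abs_fderiv_axisDist_apply_le (x := x) (w := w) hε hB fun y hy => by
      rw [hconst y hy]
    calc |fderiv ℝ (axisDist N x w) z (1, 0)| ^ p ≤ ‖w z‖ ^ p := by gcongr; simpa using hderiv
      _ ≤ g z := hw.norm_rpow_le_sum_indicator hp hz
  calc ∫ z in N, |fderiv ℝ (axisDist N x w) z (1, 0)| ^ p
      ≤ ∫ z in N, g z :=
        integral_mono_of_nonneg (.of_forall fun _ => by positivity) hg.restrict hbound
    _ ≤ ∫ z, g z := setIntegral_le_integral hg <| .of_forall fun z =>
        Finset.sum_nonneg fun i _ => indicator_nonneg (fun _ _ => by positivity) z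
    _ = ∑ i, volume.real (ball (c i) (r i)) * ‖a i‖ ^ p := by
      simp only [g, integral_finsetSum _ fun i _ => hint i,
        integral_indicator_const _ measurableSet_ball, smul_eq_mul]

end IsStepOnBalls


lemma Prod.measureReal_ball_eq_diam_sq (c : ℝ × ℝ) (r : ℝ) :
    volume.real (ball c r) = diam (ball c r) ^ 2 := by
  rcases le_or_gt r 0 with hr | hr
  · simp [ball_eq_empty.2 hr]
  rw [diam_ball_eq c hr.le, measureReal_def, ← ball_prod_same, Measure.volume_eq_prod,
    Measure.prod_prod, Real.volume_ball, Real.volume_ball, ENNReal.toReal_mul,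
    ENNReal.toReal_ofReal (by positivity)]
  ring

lemma sq_mul_rpow_one_div_one_sub_rpow {d p : ℝ} (hd : 0 ≤ d) (hp : 2 < p) :
    d ^ 2 * (d ^ (1 / (1 - p))) ^ p = d ^ ((p - 2) / (p - 1)) := by
  have hp1 : p - 1 ≠ 0 := by linarith
  have hp1' : 1 - p ≠ 0 := by linarith
  have hsum : (2 : ℝ) + 1 / (1 - p) * p = (p - 2) / (p - 1) := by
    rw [eq_div_iff hp1]
    field_simp
    ring
  rw [← Real.rpow_mul hd, ← Real.rpow_natCast, Nat.cast_ofNat,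
    ← Real.rpow_add' hd (hsum ▸ div_ne_zero (by linarith) hp1), hsum]

theorem weight_distance_function_estimates_general
    (p : ℝ) (hp : 2 < p)
    (N : Set (ℝ × ℝ)) (hNo : IsOpen N)
    (x : ℝ × ℝ)
    (k : ℕ) (c : Fin k → ℝ × ℝ) (r : Fin k → ℝ)
    (w : ℝ × ℝ → ℝ)
    (hw1 : ∀ i, ∀ z ∈ Metric.ball (c i) (r i),
      w z = Metric.diam (Metric.ball (c i) (r i)) ^ ((1 : ℝ) / (1 - p)))
    (hw0 : ∀ z ∈ N \ ⋃ i, Metric.ball (c i) (r i), w z = 0)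
    (φ : ℝ × ℝ → ℝ)
    (hφ : ∀ z : ℝ × ℝ, φ z = sInf {L : ℝ | ∃ (n : ℕ) (q : Fin (n + 1) → ℝ × ℝ),
      IsAxisPolyIn N x z q ∧ L = wLen1 w q}) :
    (∀ z ∈ N, ∃ ε > 0, ∃ K : NNReal, LipschitzOnWith K φ (Metric.ball z ε)) ∧
    (∀ a b : ℝ × ℝ, a.1 = b.1 → segment ℝ a b ⊆ N → φ a = φ b) ∧
    (∫ z in N, |fderiv ℝ φ z (1, 0)| ^ p ∂volume) ≤
      ∑ i : Fin k, Metric.diam (Metric.ball (c i) (r i)) ^ ((p - 2) / (p - 1)) := by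
  obtain rfl : φ = axisDist N x w := funext hφ
  have hw : IsStepOnBalls N c r _ w := ⟨hw1, hw0⟩
  refine ⟨fun z hz => ?_, fun a b h hab => axisDist_eq_of_fst_eq h hab, ?_⟩
  · obtain ⟨ε, hε, hB⟩ := Metric.isOpen_iff.mp hNo z hz
    exact ⟨ε, hε, _, lipschitzOnWith_axisDist hB fun y hy => hw.nnnorm_le_sum (hB hy)⟩
  refine (hw.integral_abs_fderiv_axisDist_rpow_le (by linarith) hNo x).trans_eq <|
    Finset.sum_congr rfl fun i _ => ?_
  rw [Prod.measureReal_ball_eq_diam_sq, Real.norm_of_nonneg (Real.rpow_nonneg diam_nonneg _),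
    sq_mul_rpow_one_div_one_sub_rpow diam_nonneg hp]

/-- `p > 2`, `N ⊂ ℝ²` a domain (uniform norm; `Metric.ball` is
an open axis-parallel square), `x ∈ N`, `Q₁,…,Q_k ⊆ N` pairwise disjoint squares,
`w = (diam Qᵢ)^{1/(1-p)}` on `Qᵢ` and `0` on `N` minus the squares, and
`φ(z) = inf_γ ∫_{γ⁽¹⁾} w ds` over axis-parallel polygonal paths `γ ⊆ N` from
`x` to `z`.  Then `φ` is (real-valued and) locally Lipschitz on `N`, constant on
vertical segments of `N`, and
`∫_N |∂φ/∂z₁|^p ≤ Σᵢ (diam Qᵢ)^{(p-2)/(p-1)}`. -/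
theorem weight_distance_function_estimates
    (p : ℝ) (hp : 2 < p)
    (N : Set (ℝ × ℝ)) (hNo : IsOpen N) (hNconn : IsConnected N)
    (x : ℝ × ℝ) (hx : x ∈ N)
    (k : ℕ) (c : Fin k → ℝ × ℝ) (r : Fin k → ℝ) (hr : ∀ i, 0 < r i)
    (hQsub : ∀ i, Metric.ball (c i) (r i) ⊆ N)
    (hQdisj : Pairwise fun i j => Metric.ball (c i) (r i) ∩ Metric.ball (c j) (r j) = ∅)
    (w : ℝ × ℝ → ℝ)
    (hw1 : ∀ i, ∀ z ∈ Metric.ball (c i) (r i),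
      w z = Metric.diam (Metric.ball (c i) (r i)) ^ ((1 : ℝ) / (1 - p)))
    (hw0 : ∀ z ∈ N \ ⋃ i, Metric.ball (c i) (r i), w z = 0)
    (φ : ℝ × ℝ → ℝ)
    (hφ : ∀ z : ℝ × ℝ, φ z = sInf {L : ℝ | ∃ (n : ℕ) (q : Fin (n + 1) → ℝ × ℝ),
      IsAxisPolyIn N x z q ∧ L = wLen1 w q}) :
    (∀ z ∈ N, ∃ ε > 0, ∃ K : NNReal, LipschitzOnWith K φ (Metric.ball z ε)) ∧
    (∀ a b : ℝ × ℝ, a.1 = b.1 → segment ℝ a b ⊆ N → φ a = φ b) ∧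
    (∫ z in N, |fderiv ℝ φ z (1, 0)| ^ p ∂volume) ≤
      ∑ i : Fin k, Metric.diam (Metric.ball (c i) (r i)) ^ ((p - 2) / (p - 1)) :=
  weight_distance_function_estimates_general p hp N hNo x k c r w hw1 hw0 φ hφ
end IsStepOnBalls
end
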